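/- arXiv:1808.09698 — 10 statements merged into one kernel-verified Lean document; each statement's English description precedes it below -/
import Mathlib

section
/- Let C be a copula that is positively quadrant dependent, i.e. C(x,y) ≥ xy for all x,y ∈ [0,1]. Then for all x,y ∈ [0,1] one has |C(x,y) − C(y,x)| ≤ min{x(1−y), (1−x)y, |x−y|}. -/
/-- A (bivariate) copula: boundary conditions, values in [0,1], and 2-increasingness. -/
def IsCopula (C : ℝ → ℝ → ℝ) : Prop :=
  (∀ x ∈ Set.Icc (0:ℝ) 1, ∀ y ∈ Set.Icc (0:ℝ) 1, C x y ∈ Set.Icc (0:ℝ) 1) ∧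
  (∀ x ∈ Set.Icc (0:ℝ) 1, C x 0 = 0 ∧ C 0 x = 0 ∧ C x 1 = x ∧ C 1 x = x) ∧
  (∀ x₁ x₂ y₁ y₂ : ℝ, 0 ≤ x₁ → x₁ ≤ x₂ → x₂ ≤ 1 → 0 ≤ y₁ → y₁ ≤ y₂ → y₂ ≤ 1 →
    0 ≤ C x₂ y₂ - C x₂ y₁ - C x₁ y₂ + C x₁ y₁)

/-- for a positively quadrant dependent copula `C`,
`|C(x,y) − C(y,x)| ≤ min{x(1−y), (1−x)y, |x−y|}` for all `x, y ∈ [0,1]`. -/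
theorem pqd_maximal_asymmetry_bound (C : ℝ → ℝ → ℝ) (hC : IsCopula C)
    (hPQD : ∀ x ∈ Set.Icc (0:ℝ) 1, ∀ y ∈ Set.Icc (0:ℝ) 1, x * y ≤ C x y) :
    ∀ x ∈ Set.Icc (0:ℝ) 1, ∀ y ∈ Set.Icc (0:ℝ) 1,
      |C x y - C y x| ≤ min (x * (1 - y)) (min ((1 - x) * y) |x - y|) := by
  obtain ⟨hB, hbd, h2⟩ := hC
  -- boundary helpers
  have hb : ∀ x, 0 ≤ x → x ≤ 1 → C x 0 = 0 ∧ C 0 x = 0 ∧ C x 1 = x ∧ C 1 x = x := by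
    intro x h0 h1; exact hbd x ⟨h0, h1⟩
  -- monotone in first argument
  have mono1 : ∀ x₁ x₂ y, 0 ≤ x₁ → x₁ ≤ x₂ → x₂ ≤ 1 → 0 ≤ y → y ≤ 1 →
      C x₁ y ≤ C x₂ y := by
    intro x₁ x₂ y h0 h12 h21 hy0 hy1
    have := h2 x₁ x₂ 0 y h0 h12 h21 le_rfl hy0 hy1
    have e1 := (hb x₁ h0 (h12.trans h21)).1
    have e2 := (hb x₂ (h0.trans h12) h21).1
    linarith
  have mono2 : ∀ x y₁ y₂, 0 ≤ x → x ≤ 1 → 0 ≤ y₁ → y₁ ≤ y₂ → y₂ ≤ 1 →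
      C x y₁ ≤ C x y₂ := by
    intro x y₁ y₂ hx0 hx1 h0 h12 h21
    have := h2 0 x y₁ y₂ le_rfl hx0 hx1 h0 h12 h21
    have e1 := (hb y₁ h0 (h12.trans h21)).2.1
    have e2 := (hb y₂ (h0.trans h12) h21).2.1
    linarith
  -- Lipschitz in first argument
  have lip1 : ∀ x₁ x₂ y, 0 ≤ x₁ → x₁ ≤ x₂ → x₂ ≤ 1 → 0 ≤ y → y ≤ 1 →
      C x₂ y - C x₁ y ≤ x₂ - x₁ := by
    intro x₁ x₂ y h0 h12 h21 hy0 hy1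
    have := h2 x₁ x₂ y 1 h0 h12 h21 hy0 hy1 le_rfl
    have e1 := (hb x₁ h0 (h12.trans h21)).2.2.1
    have e2 := (hb x₂ (h0.trans h12) h21).2.2.1
    linarith
  have lip2 : ∀ x y₁ y₂, 0 ≤ x → x ≤ 1 → 0 ≤ y₁ → y₁ ≤ y₂ → y₂ ≤ 1 →
      C x y₂ - C x y₁ ≤ y₂ - y₁ := by
    intro x y₁ y₂ hx0 hx1 h0 h12 h21
    have := h2 x 1 y₁ y₂ hx0 hx1 le_rfl h0 h12 h21
    have e1 := (hb y₁ h0 (h12.trans h21)).2.2.2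
    have e2 := (hb y₂ (h0.trans h12) h21).2.2.2
    linarith
  intro x hx y hy
  obtain ⟨hx0, hx1⟩ := hx
  obtain ⟨hy0, hy1⟩ := hy
  -- Fréchet upper bound via monotonicity
  have hub1 : C x y ≤ x := by
    have := mono2 x y 1 hx0 hx1 hy0 hy1 le_rfl
    have e := (hb x hx0 hx1).2.2.1
    linarith
  have hub2 : C x y ≤ y := by
    have := mono1 x 1 y hx0 hx1 le_rfl hy0 hy1
    have e := (hb y hy0 hy1).2.2.2
    linarith
  have hub3 : C y x ≤ y := by
    have := mono2 y x 1 hy0 hy1 hx0 hx1 le_rfl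
    have e := (hb y hy0 hy1).2.2.1
    linarith
  have hub4 : C y x ≤ x := by
    have := mono1 y 1 x hy0 hy1 le_rfl hx0 hx1
    have e := (hb x hx0 hx1).2.2.2
    linarith
  have hlb1 : x * y ≤ C x y := hPQD x ⟨hx0, hx1⟩ y ⟨hy0, hy1⟩
  have hlb2 : y * x ≤ C y x := hPQD y ⟨hy0, hy1⟩ x ⟨hx0, hx1⟩
  refine le_min ?_ (le_min ?_ ?_)
  · rw [abs_le]; constructor <;> nlinarith
  · rw [abs_le]; constructor <;> nlinarith
  · rcases le_total x y with h | h
    · have h1 : C x x ≤ C x y := mono2 x x y hx0 hx1 hx0 h hy1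
      have h2' : C x y - C x x ≤ y - x := lip2 x x y hx0 hx1 hx0 h hy1
      have h3 : C x x ≤ C y x := mono1 x y x hx0 h hy1 hx0 hx1
      have h4 : C y x - C x x ≤ y - x := lip1 x y x hx0 h hy1 hx0 hx1
      rw [abs_of_nonpos (by linarith : x - y ≤ 0), abs_le]
      constructor <;> linarith
    · have h1 : C y y ≤ C y x := mono2 y y x hy0 hy1 hy0 h hx1
      have h2' : C y x - C y y ≤ x - y := lip2 y y x hy0 hy1 hy0 h hx1
      have h3 : C y y ≤ C x y := mono1 y x y hy0 h hx1 hy0 hy1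
      have h4 : C x y - C y y ≤ x - y := lip1 y x y hy0 h hx1 hy0 hy1
      rw [abs_of_nonneg (by linarith : (0:ℝ) ≤ x - y), abs_le]
      constructor <;> linarith
end

section
/- Let 0 < a < 1 and a ≤ b ≤ 2a/(a+1), and define the density q_{a,b} : [0,1]² → ℝ by q_{a,b}(x,y) = (2a−b)/a² if 0 ≤ x,y ≤ a; q_{a,b}(x,y) = 1/a if 0 ≤ x ≤ a and a < y ≤ b; q_{a,b}(x,y) = 1/(1−b) if a < x ≤ b and b < y ≤ 1; q_{a,b}(x,y) = (b−a)/(a(1−b)) if b < x ≤ 1 and 0 ≤ y ≤ a; q_{a,b}(x,y) = (1+a−2b)/(1−b)² if b < x,y ≤ 1; and q_{a,b}(x,y) = 0 otherwise. Define Q_{a,b}(x,y) = ∫₀^x ∫₀^y q_{a,b}(s,t) dt ds. Then Q_{a,b} is a copula, Q_{a,b}(x,y) ≥ xy for all x,y ∈ [0,1], and Q_{a,b}(a,b) − Q_{a,b}(b,a) = b − a = min{a(1−b), (1−a)b, |a−b|}. -/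
/-- The density `q_{a,b}` from Theorem 3.1 of the paper. -/
noncomputable def qab (a b : ℝ) : ℝ → ℝ → ℝ := fun x y =>
  if 0 ≤ x ∧ x ≤ a ∧ 0 ≤ y ∧ y ≤ a then (2 * a - b) / a ^ 2
  else if 0 ≤ x ∧ x ≤ a ∧ a < y ∧ y ≤ b then 1 / a
  else if a < x ∧ x ≤ b ∧ b < y ∧ y ≤ 1 then 1 / (1 - b)
  else if b < x ∧ x ≤ 1 ∧ 0 ≤ y ∧ y ≤ a then (b - a) / (a * (1 - b))
  else if b < x ∧ x ≤ 1 ∧ b < y ∧ y ≤ 1 then (1 + a - 2 * b) / (1 - b) ^ 2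
  else 0

/-- The absolutely continuous copula `Q_{a,b}` with density `q_{a,b}`. -/
noncomputable def Qab (a b : ℝ) : ℝ → ℝ → ℝ := fun x y =>
  ∫ s in (0:ℝ)..x, ∫ t in (0:ℝ)..y, qab a b s t

/-!
The density `q_{a,b}` is constant on the cells of the `3 × 3` grid cut out by `0 < a ≤ b < 1`,
so `Q_{a,b}(x, y) = ℓ(x) ⬝ M ℓ(y)`, where `M = qabMatrix a b` holds the values of the density and
`ℓ(x) = cellLength a b x` the lengths of the three cells inside `[0, x]`. Such a checkerboard
function is 2-increasing when `M ≥ 0`, and has uniform margins when `M ℓ(1) = 1 = ℓ(1) M`.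
Since `ℓ` is affine on every cell, `Q_{a,b}(x, y) - x y` is bilinear on every grid cell, so
positive quadrant dependence only has to be checked at the grid points `(a, a), (a, b), (b, a),
(b, b)`, where `Q_{a,b}` takes the values `2a - b, a, 2a - b, a`.
-/

open Set Matrix MeasureTheory

/-- For `x ∈ [0, 1]`, the lengths of `(0, x] ∩ cellIoc p q i`. -/
noncomputable def cellLength (p q x : ℝ) : Fin 3 → ℝ := ![min x p, min x q - min x p, x - min x q]

def cellIoc (p q : ℝ) : Fin 3 → Set ℝ := ![Ioc 0 p, Ioc p q, Ioc q 1]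

section cellLength

variable {p q : ℝ}

lemma cellLength_mono (hpq : p ≤ q) : Monotone (cellLength p q) := by
  intro x y hxy i
  fin_cases i
  · exact min_le_min_right p hxy
  · show min x q - min x p ≤ min y q - min y p
    simp only [min_def]; split_ifs <;> linarith
  · show x - min x q ≤ y - min y q
    simp only [min_def]; split_ifs <;> linarith

lemma cellLength_zero (hp : 0 ≤ p) (hq : 0 ≤ q) : cellLength p q 0 = 0 := by
  ext i; fin_cases i <;> simp [cellLength, hp, hq]

lemma sum_cellLength (x : ℝ) : ∑ i, cellLength p q x i = x := by
  simp [cellLength, Fin.sum_univ_three]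

lemma cellLength_left (hpq : p ≤ q) : cellLength p q p = ![p, 0, 0] := by
  simp [cellLength, hpq]

lemma cellLength_right (hpq : p ≤ q) : cellLength p q q = ![p, q - p, 0] := by
  simp [cellLength, hpq]

lemma cellLength_one (hpq : p ≤ q) (hq : q ≤ 1) : cellLength p q 1 = ![p, q - p, 1 - q] := by
  simp [cellLength, hq, hpq.trans hq]

end cellLength

section stepIntegral

variable {f : ℝ → ℝ} {u v c : ℝ}

lemma intervalIntegrable_of_eq_const_on_Ioc (huv : u ≤ v) (hf : ∀ t ∈ Ioc u v, f t = c) :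
    IntervalIntegrable f volume u v :=
  (intervalIntegrable_congr (g := fun _ => c) (by rwa [uIoc_of_le huv])).2 intervalIntegrable_const

lemma intervalIntegral_eq_of_eq_const_on_Ioc (huv : u ≤ v) (hf : ∀ t ∈ Ioc u v, f t = c) :
    ∫ t in u..v, f t = (v - u) * c := by
  rw [intervalIntegral.integral_congr_ae (g := fun _ => c)
    (ae_of_all _ (by rwa [uIoc_of_le huv])), intervalIntegral.integral_const,
    smul_eq_mul]

lemma integral_eq_cellLength_dotProduct {p q : ℝ} (hp : 0 ≤ p) (hpq : p ≤ q) {c : Fin 3 → ℝ}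
    (hf : ∀ i, ∀ t ∈ cellIoc p q i, f t = c i) {y : ℝ} (hy : y ∈ Icc 0 1) :
    ∫ t in 0..y, f t = cellLength p q y ⬝ᵥ c := by
  have h₀ : ∀ t ∈ Ioc 0 (min y p), f t = c 0 := fun t ht =>
    hf 0 t ⟨ht.1, ht.2.trans (min_le_right _ _)⟩
  have h₁ : ∀ t ∈ Ioc (min y p) (min y q), f t = c 1 := fun t ht =>
    hf 1 t ⟨lt_of_not_ge fun h => ht.1.not_ge (le_min (ht.2.trans (min_le_left _ _)) h),
      ht.2.trans (min_le_right _ _)⟩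
  have h₂ : ∀ t ∈ Ioc (min y q) y, f t = c 2 := fun t ht =>
    hf 2 t ⟨lt_of_not_ge fun h => ht.1.not_ge (le_min ht.2 h), ht.2.trans hy.2⟩
  have hy₀ : 0 ≤ min y p := le_min hy.1 hp
  have hy₁ : min y p ≤ min y q := min_le_min le_rfl hpq
  have hy₂ : min y q ≤ y := min_le_left _ _
  have i₀ := intervalIntegrable_of_eq_const_on_Ioc hy₀ h₀
  have i₁ := intervalIntegrable_of_eq_const_on_Ioc hy₁ h₁
  have i₂ := intervalIntegrable_of_eq_const_on_Ioc hy₂ h₂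
  rw [← intervalIntegral.integral_add_adjacent_intervals (i₀.trans i₁) i₂,
    ← intervalIntegral.integral_add_adjacent_intervals i₀ i₁,
    intervalIntegral_eq_of_eq_const_on_Ioc hy₀ h₀, intervalIntegral_eq_of_eq_const_on_Ioc hy₁ h₁,
    intervalIntegral_eq_of_eq_const_on_Ioc hy₂ h₂]
  simp [cellLength, dotProduct, Fin.sum_univ_three]

end stepIntegral

lemma IsCopula.of_margins_of_rect_nonneg {C : ℝ → ℝ → ℝ}
    (hC : ∀ x ∈ Icc (0:ℝ) 1, C x 0 = 0 ∧ C 0 x = 0 ∧ C x 1 = x ∧ C 1 x = x)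
    (hrect : ∀ x₁ x₂ y₁ y₂ : ℝ, 0 ≤ x₁ → x₁ ≤ x₂ → x₂ ≤ 1 → 0 ≤ y₁ → y₁ ≤ y₂ → y₂ ≤ 1 →
      0 ≤ C x₂ y₂ - C x₂ y₁ - C x₁ y₂ + C x₁ y₁) :
    IsCopula C := by
  refine ⟨fun x hx y hy => ⟨?_, ?_⟩, hC, hrect⟩
  · have := hrect 0 x 0 y le_rfl hx.1 hx.2 le_rfl hy.1 hy.2
    linarith [(hC x hx).1, (hC y hy).2.1, (hC 0 ⟨le_rfl, zero_le_one⟩).1]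
  · have := hrect 0 x y 1 le_rfl hx.1 hx.2 hy.1 hy.2 le_rfl
    linarith [(hC x hx).2.2.1, (hC y hy).2.1, (hC 1 ⟨zero_le_one, le_rfl⟩).2.1, hx.2]

lemma IsCopula.congr {C D : ℝ → ℝ → ℝ} (hC : IsCopula C)
    (h : ∀ x ∈ Icc (0:ℝ) 1, ∀ y ∈ Icc (0:ℝ) 1, C x y = D x y) : IsCopula D := by
  have h0 : (0:ℝ) ∈ Icc (0:ℝ) 1 := ⟨le_rfl, zero_le_one⟩
  have h1 : (1:ℝ) ∈ Icc (0:ℝ) 1 := ⟨zero_le_one, le_rfl⟩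
  obtain ⟨hrange, hmargin, hrect⟩ := hC
  refine ⟨fun x hx y hy => h x hx y hy ▸ hrange x hx y hy, fun x hx => ?_, ?_⟩
  · rw [← h x hx 0 h0, ← h 0 h0 x hx, ← h x hx 1 h1, ← h 1 h1 x hx]
    exact hmargin x hx
  · intro x₁ x₂ y₁ y₂ hx₁ hx₁₂ hx₂ hy₁ hy₁₂ hy₂
    have mx₁ : x₁ ∈ Icc (0:ℝ) 1 := ⟨hx₁, hx₁₂.trans hx₂⟩
    have mx₂ : x₂ ∈ Icc (0:ℝ) 1 := ⟨hx₁.trans hx₁₂, hx₂⟩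
    have my₁ : y₁ ∈ Icc (0:ℝ) 1 := ⟨hy₁, hy₁₂.trans hy₂⟩
    have my₂ : y₂ ∈ Icc (0:ℝ) 1 := ⟨hy₁.trans hy₁₂, hy₂⟩
    rw [← h x₁ mx₁ y₁ my₁, ← h x₁ mx₁ y₂ my₂, ← h x₂ mx₂ y₁ my₁, ← h x₂ mx₂ y₂ my₂]
    exact hrect x₁ x₂ y₁ y₂ hx₁ hx₁₂ hx₂ hy₁ hy₁₂ hy₂

lemma add_sub_mul_nonneg {u v x A s : ℝ} (hux : u ≤ x) (hxv : x ≤ v) (hA : 0 ≤ A)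
    (hB : 0 ≤ A + (v - u) * s) : 0 ≤ A + (x - u) * s := by
  rcases le_total 0 s with hs | hs
  · nlinarith [mul_nonneg hs (sub_nonneg.2 hux)]
  · nlinarith [mul_le_mul_of_nonpos_left (sub_le_sub_right hxv u) hs]

noncomputable def checkerboard (M : Matrix (Fin 3) (Fin 3) ℝ) (p q x y : ℝ) : ℝ :=
  cellLength p q x ⬝ᵥ M *ᵥ cellLength p q y

section checkerboard

variable {M : Matrix (Fin 3) (Fin 3) ℝ} {p q : ℝ}

lemma checkerboard_rect (x₁ x₂ y₁ y₂ : ℝ) :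
    checkerboard M p q x₂ y₂ - checkerboard M p q x₂ y₁ - checkerboard M p q x₁ y₂
      + checkerboard M p q x₁ y₁
      = (cellLength p q x₂ - cellLength p q x₁) ⬝ᵥ
          M *ᵥ (cellLength p q y₂ - cellLength p q y₁) := by
  simp only [checkerboard, mulVec_sub, dotProduct_sub, sub_dotProduct]
  ring

lemma checkerboard_rect_nonneg (hpq : p ≤ q) (hM : ∀ i j, 0 ≤ M i j) {x₁ x₂ y₁ y₂ : ℝ}
    (hx : x₁ ≤ x₂) (hy : y₁ ≤ y₂) :
    0 ≤ checkerboard M p q x₂ y₂ - checkerboard M p q x₂ y₁ - checkerboard M p q x₁ y₂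
      + checkerboard M p q x₁ y₁ := by
  rw [checkerboard_rect]
  refine dotProduct_nonneg_of_nonneg (sub_nonneg.2 (cellLength_mono hpq hx)) fun i => ?_
  exact dotProduct_nonneg_of_nonneg (fun j => hM i j) (sub_nonneg.2 (cellLength_mono hpq hy))

lemma checkerboard_zero_left (hp : 0 ≤ p) (hq : 0 ≤ q) (y : ℝ) : checkerboard M p q 0 y = 0 := by
  simp [checkerboard, cellLength_zero hp hq]

lemma checkerboard_zero_right (hp : 0 ≤ p) (hq : 0 ≤ q) (x : ℝ) : checkerboard M p q x 0 = 0 := by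
  simp [checkerboard, cellLength_zero hp hq]

lemma checkerboard_one_right (hrow : M *ᵥ cellLength p q 1 = 1) (x : ℝ) :
    checkerboard M p q x 1 = x := by
  rw [checkerboard, hrow, dotProduct_one, sum_cellLength]

lemma checkerboard_one_left (hcol : cellLength p q 1 ᵥ* M = 1) (y : ℝ) :
    checkerboard M p q 1 y = y := by
  rw [checkerboard, dotProduct_mulVec, hcol, dotProduct_comm, dotProduct_one, sum_cellLength]

lemma isCopula_checkerboard (hp : 0 ≤ p) (hpq : p ≤ q) (hM : ∀ i j, 0 ≤ M i j)
    (hrow : M *ᵥ cellLength p q 1 = 1) (hcol : cellLength p q 1 ᵥ* M = 1) :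
    IsCopula (checkerboard M p q) :=
  .of_margins_of_rect_nonneg
    (fun x _ => ⟨checkerboard_zero_right hp (hp.trans hpq) x,
      checkerboard_zero_left hp (hp.trans hpq) x, checkerboard_one_right hrow x,
      checkerboard_one_left hcol x⟩)
    (fun _ _ _ _ _ hx _ _ hy _ => checkerboard_rect_nonneg hpq hM hx hy)

lemma cellLength_dotProduct_nonneg (hpq : p ≤ q) (hq : q ≤ 1) {w : Fin 3 → ℝ}
    (hwp : 0 ≤ cellLength p q p ⬝ᵥ w) (hwq : 0 ≤ cellLength p q q ⬝ᵥ w)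
    (hw₁ : 0 ≤ cellLength p q 1 ⬝ᵥ w) {x : ℝ} (hx : x ∈ Icc 0 1) :
    0 ≤ cellLength p q x ⬝ᵥ w := by
  rw [cellLength_left hpq] at hwp
  rw [cellLength_right hpq] at hwq
  rw [cellLength_one hpq hq] at hw₁
  simp only [cellLength, vec3_dotProduct, cons_val_zero, cons_val_one, cons_val_two, head_cons,
    tail_cons, zero_mul, add_zero] at hwp hwq hw₁ ⊢
  obtain ⟨hx₀, hx₁⟩ := hx
  rcases le_total x p with hxp | hpx
  · rw [min_eq_left hxp, min_eq_left (hxp.trans hpq)]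
    linarith [add_sub_mul_nonneg hx₀ hxp le_rfl (by linarith : 0 ≤ 0 + (p - 0) * w 0)]
  rcases le_total x q with hxq | hqx
  · rw [min_eq_right hpx, min_eq_left hxq]
    linarith [add_sub_mul_nonneg hpx hxq hwp hwq]
  · rw [min_eq_right hpx, min_eq_right hqx]
    linarith [add_sub_mul_nonneg hqx hx₁ hwq hw₁]

lemma mul_le_checkerboard (hpq : p ≤ q) (hq : q ≤ 1)
    (hrow : M *ᵥ cellLength p q 1 = 1) (hcol : cellLength p q 1 ᵥ* M = 1)
    (hgrid : ∀ g ∈ ({p, q} : Set ℝ), ∀ h ∈ ({p, q} : Set ℝ), g * h ≤ checkerboard M p q g h)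
    {x y : ℝ} (hx : x ∈ Icc 0 1) (hy : y ∈ Icc 0 1) :
    x * y ≤ checkerboard M p q x y := by
  have hrowwise : ∀ x y, checkerboard M p q x y - x * y
      = cellLength p q x ⬝ᵥ (M *ᵥ cellLength p q y - y • 1) := by
    intro x y
    rw [dotProduct_sub, dotProduct_smul, dotProduct_one, sum_cellLength, checkerboard, smul_eq_mul,
      mul_comm]
  have hcolwise : ∀ x y, checkerboard M p q x y - x * y
      = cellLength p q y ⬝ᵥ (cellLength p q x ᵥ* M - x • 1) := by
    intro x y
    rw [dotProduct_sub, dotProduct_smul, dotProduct_one, sum_cellLength, checkerboard,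
      dotProduct_mulVec, dotProduct_comm, smul_eq_mul]
  have hslice : ∀ g ∈ ({p, q} : Set ℝ), ∀ y ∈ Icc (0:ℝ) 1, g * y ≤ checkerboard M p q g y := by
    intro g hg y hy
    rw [← sub_nonneg, hcolwise]
    refine cellLength_dotProduct_nonneg hpq hq ?_ ?_ ?_ hy <;> rw [← hcolwise, sub_nonneg]
    · exact hgrid g hg p (by simp)
    · exact hgrid g hg q (by simp)
    · rw [checkerboard_one_right hrow, mul_one]
  rw [← sub_nonneg, hrowwise]
  refine cellLength_dotProduct_nonneg hpq hq ?_ ?_ ?_ hx <;> rw [← hrowwise, sub_nonneg]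
  · exact hslice p (by simp) y hy
  · exact hslice q (by simp) y hy
  · rw [checkerboard_one_left hcol, one_mul]

end checkerboard

noncomputable def qabMatrix (a b : ℝ) : Matrix (Fin 3) (Fin 3) ℝ :=
  !![(2 * a - b) / a ^ 2, 1 / a, 0;
     0, 0, 1 / (1 - b);
     (b - a) / (a * (1 - b)), 0, (1 + a - 2 * b) / (1 - b) ^ 2]

section qab

variable {a b : ℝ}

lemma qab_eq_qabMatrix (hab : a ≤ b) {i j : Fin 3} {s t : ℝ} (hs : s ∈ cellIoc a b i)
    (ht : t ∈ cellIoc a b j) : qab a b s t = qabMatrix a b i j := by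
  fin_cases i <;> fin_cases j <;>
    simp only [cellIoc, qabMatrix, Fin.zero_eta, Fin.mk_one, Fin.reduceFinMk, Fin.isValue, of_apply,
      cons_val_zero, cons_val_one, cons_val, cons_val', cons_val_fin_one, mem_Ioc] at hs ht ⊢ <;>
    grind [qab]

lemma Qab_eq_checkerboard (ha : 0 ≤ a) (hab : a ≤ b) {x y : ℝ} (hx : x ∈ Icc 0 1)
    (hy : y ∈ Icc 0 1) : Qab a b x y = checkerboard (qabMatrix a b) a b x y := by
  have inner : ∀ i, ∀ s ∈ cellIoc a b i,
      ∫ t in 0..y, qab a b s t = (qabMatrix a b *ᵥ cellLength a b y) i := by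
    intro i s hs
    rw [mulVec, dotProduct_comm]
    exact integral_eq_cellLength_dotProduct ha hab (fun j t ht => qab_eq_qabMatrix hab hs ht) hy
  exact integral_eq_cellLength_dotProduct ha hab inner hx

lemma qabMatrix_nonneg (ha : 0 < a) (hab : a ≤ b) (hb : b < 1) (hb₂ : b ≤ 2 * a)
    (hb₃ : 2 * b ≤ 1 + a) (i j : Fin 3) : 0 ≤ qabMatrix a b i j := by
  have h₁ : 0 < 1 - b := by linarith
  fin_cases i <;> fin_cases j <;>
    simp only [qabMatrix, Fin.zero_eta, Fin.mk_one, Fin.reduceFinMk, Fin.isValue, of_apply,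
      cons_val_zero, cons_val_one, cons_val, cons_val', cons_val_fin_one]
  all_goals first | linarith | exact div_nonneg (by linarith) (by nlinarith)

lemma qabMatrix_mulVec_cellLength_one (ha : 0 < a) (hab : a ≤ b) (hb : b < 1) :
    qabMatrix a b *ᵥ cellLength a b 1 = 1 := by
  have h₁ : 1 - b ≠ 0 := by linarith
  rw [cellLength_one hab hb.le]
  ext i
  fin_cases i <;>
    simp only [qabMatrix, mulVec, vec3_dotProduct, of_apply, cons_val', cons_val_zero, cons_val_one,
      cons_val, cons_val_fin_one, Fin.isValue, Fin.zero_eta, Fin.mk_one, Fin.reduceFinMk,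
      Pi.one_apply] <;>
    field_simp <;> ring

lemma cellLength_one_vecMul_qabMatrix (ha : 0 < a) (hab : a ≤ b) (hb : b < 1) :
    cellLength a b 1 ᵥ* qabMatrix a b = 1 := by
  have h₁ : 1 - b ≠ 0 := by linarith
  rw [cellLength_one hab hb.le]
  ext i
  fin_cases i <;>
    simp only [qabMatrix, vecMul, vec3_dotProduct, of_apply, cons_val', cons_val_zero, cons_val_one,
      cons_val, cons_val_fin_one, Fin.isValue, Fin.zero_eta, Fin.mk_one, Fin.reduceFinMk,
      Pi.one_apply] <;>
    field_simp <;> ring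

lemma checkerboard_qabMatrix_left_left (ha : 0 < a) (hab : a ≤ b) :
    checkerboard (qabMatrix a b) a b a a = 2 * a - b := by
  rw [checkerboard, cellLength_left hab]
  simp only [qabMatrix, mulVec, vec3_dotProduct, of_apply, cons_val', cons_val_zero, cons_val_one,
    cons_val, cons_val_fin_one, Fin.isValue]
  field_simp
  ring

lemma checkerboard_qabMatrix_left_right (ha : 0 < a) (hab : a ≤ b) :
    checkerboard (qabMatrix a b) a b a b = a := by
  rw [checkerboard, cellLength_left hab, cellLength_right hab]
  simp only [qabMatrix, mulVec, vec3_dotProduct, of_apply, cons_val', cons_val_zero, cons_val_one,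
    cons_val, cons_val_fin_one, Fin.isValue]
  field_simp
  ring

lemma checkerboard_qabMatrix_right_left (ha : 0 < a) (hab : a ≤ b) :
    checkerboard (qabMatrix a b) a b b a = 2 * a - b := by
  rw [checkerboard, cellLength_left hab, cellLength_right hab]
  simp only [qabMatrix, mulVec, vec3_dotProduct, of_apply, cons_val', cons_val_zero, cons_val_one,
    cons_val, cons_val_fin_one, Fin.isValue]
  field_simp
  ring

lemma checkerboard_qabMatrix_right_right (ha : 0 < a) (hab : a ≤ b) :
    checkerboard (qabMatrix a b) a b b b = a := by
  rw [checkerboard, cellLength_right hab]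
  simp only [qabMatrix, mulVec, vec3_dotProduct, of_apply, cons_val', cons_val_zero, cons_val_one,
    cons_val, cons_val_fin_one, Fin.isValue]
  field_simp
  ring

end qab

lemma sub_eq_min_of_mul_add_one_le {a b : ℝ} (hab : a ≤ b)
    (hb : b * (a + 1) ≤ 2 * a) : b - a = min (a * (1 - b)) (min ((1 - a) * b) |a - b|) := by
  rw [abs_sub_comm, abs_of_nonneg (sub_nonneg.2 hab),
    min_eq_right (show b - a ≤ (1 - a) * b by nlinarith),
    min_eq_right (show b - a ≤ a * (1 - b) by nlinarith)]

/-- for `0 < a < 1` and `a ≤ b ≤ 2a/(a+1)`, `Q_{a,b}` is a PQD copula with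
`Q_{a,b}(a,b) − Q_{a,b}(b,a) = b − a = min{a(1−b), (1−a)b, |a−b|}`. -/
theorem Qab_is_extremal_pqd_copula (a b : ℝ) (ha0 : 0 < a) (ha1 : a < 1)
    (hab : a ≤ b) (hb : b ≤ 2 * a / (a + 1)) :
    IsCopula (Qab a b) ∧
    (∀ x ∈ Set.Icc (0:ℝ) 1, ∀ y ∈ Set.Icc (0:ℝ) 1, x * y ≤ Qab a b x y) ∧
    Qab a b a b - Qab a b b a = b - a ∧
    b - a = min (a * (1 - b)) (min ((1 - a) * b) |a - b|) := by
  have hb' : b * (a + 1) ≤ 2 * a := (le_div_iff₀ (by linarith)).1 hb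
  have hb₁ : b < 1 := by nlinarith
  have hQ : ∀ x ∈ Icc (0:ℝ) 1, ∀ y ∈ Icc (0:ℝ) 1,
      checkerboard (qabMatrix a b) a b x y = Qab a b x y :=
    fun x hx y hy => (Qab_eq_checkerboard ha0.le hab hx hy).symm
  have hrow := qabMatrix_mulVec_cellLength_one ha0 hab hb₁
  have hcol := cellLength_one_vecMul_qabMatrix ha0 hab hb₁
  have hgrid : ∀ g ∈ ({a, b} : Set ℝ), ∀ h ∈ ({a, b} : Set ℝ),
      g * h ≤ checkerboard (qabMatrix a b) a b g h := by
    rintro g (rfl | rfl) h (rfl | rfl)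
    · rw [checkerboard_qabMatrix_left_left ha0 hab]; nlinarith
    · rw [checkerboard_qabMatrix_left_right ha0 hab]; nlinarith
    · rw [checkerboard_qabMatrix_right_left ha0 hab]; nlinarith
    · rw [checkerboard_qabMatrix_right_right ha0 hab]; nlinarith [sq_nonneg (1 - a)]
  refine ⟨(isCopula_checkerboard ha0.le hab (qabMatrix_nonneg ha0 hab hb₁ (by nlinarith)
      (by nlinarith [sq_nonneg (1 - a)])) hrow hcol).congr hQ,
    fun x hx y hy => hQ x hx y hy ▸ mul_le_checkerboard hab hb₁.le hrow hcol hgrid hx hy, ?_,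
    sub_eq_min_of_mul_add_one_le hab hb'⟩
  rw [← hQ a ⟨ha0.le, ha1.le⟩ b ⟨ha0.le.trans hab, hb₁.le⟩,
    ← hQ b ⟨ha0.le.trans hab, hb₁.le⟩ a ⟨ha0.le, ha1.le⟩,
    checkerboard_qabMatrix_left_right ha0 hab, checkerboard_qabMatrix_right_left ha0 hab]
  ring
end

section
/- For λ ∈ [0, (3−√5)/2] define N_λ : [0,1]² → [0,1] by N_λ(x,y) = max{max{x+y−1, 0}, min{y−λ, xy}}, and set μ = (1−3λ+λ²)/(1−λ). Then N_λ is a copula with N_λ(x,y) ≤ xy for all x,y ∈ [0,1], μ ∈ [0,1], and for all x,y ∈ [0,1] with |x+y−1| = μ one has |N_λ(x,y) − N_λ(y,x)| = min{xy, (1−x)(1−y), |x−y|}. -/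
set_option maxHeartbeats 1000000

/-- The copula `N_λ(x,y) = max{W(x,y), min{y−λ, xy}}` with `W(x,y) = max{x+y−1, 0}`. -/
noncomputable def Nlam (l : ℝ) : ℝ → ℝ → ℝ := fun x y =>
  max (max (x + y - 1) 0) (min (y - l) (x * y))

/-- Auxiliary: the "linear part" `G(x,y) = max{x+y−1, y−λ, 0}`. -/
noncomputable def Gfun (l x y : ℝ) : ℝ := max (max (x + y - 1) (y - l)) 0

lemma G_ge1 (l x y : ℝ) : x + y - 1 ≤ Gfun l x y := le_trans (le_max_left _ _) (le_max_left _ _)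
lemma G_ge2 (l x y : ℝ) : y - l ≤ Gfun l x y := le_trans (le_max_right _ _) (le_max_left _ _)
lemma G_ge0 (l x y : ℝ) : 0 ≤ Gfun l x y := le_max_right _ _

/-- `G` is supermodular. -/
lemma Gsuper (l x1 x2 y1 y2 : ℝ) (hx : x1 ≤ x2) (hy : y1 ≤ y2) :
    Gfun l x1 y2 + Gfun l x2 y1 ≤ Gfun l x1 y1 + Gfun l x2 y2 := by
  unfold Gfun
  simp only [max_def]
  split_ifs <;> linarith

/-- On the region `λ ≤ y(1−x)`, `N_λ` coincides with the product copula. -/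
lemma nR1 (l x y : ℝ) (hx0 : 0 ≤ x) (hx1 : x ≤ 1) (hy0 : 0 ≤ y) (hy1 : y ≤ 1)
    (hr : l ≤ y * (1 - x)) : Nlam l x y = x * y := by
  have h1 : x * y ≤ y - l := by nlinarith
  have h2 : x + y - 1 ≤ x * y := by nlinarith
  have h3 : (0:ℝ) ≤ x * y := mul_nonneg hx0 hy0
  show max (max (x + y - 1) 0) (min (y - l) (x * y)) = x * y
  rw [min_eq_right h1]
  exact max_eq_right (max_le h2 h3)

/-- On the region `y(1−x) ≤ λ`, `N_λ` coincides with `G`. -/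
lemma nR2 (l x y : ℝ) (hr : y * (1 - x) ≤ l) : Nlam l x y = Gfun l x y := by
  have h1 : y - l ≤ x * y := by nlinarith
  show max (max (x + y - 1) 0) (min (y - l) (x * y)) = max (max (x + y - 1) (y - l)) 0
  rw [min_eq_left h1]; exact sup_right_comm _ _ _

/-- `N_λ` is 2-increasing. -/
lemma key2incr (l x1 x2 y1 y2 : ℝ) (hx0 : 0 ≤ x1) (hx : x1 ≤ x2) (hx2 : x2 ≤ 1)
    (hy0 : 0 ≤ y1) (hy : y1 ≤ y2) (hy2 : y2 ≤ 1) :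
    0 ≤ Nlam l x2 y2 - Nlam l x2 y1 - Nlam l x1 y2 + Nlam l x1 y1 := by
  have hx10 : 0 ≤ x2 := le_trans hx0 hx
  have hx11 : x1 ≤ 1 := le_trans hx hx2
  have hy10 : 0 ≤ y2 := le_trans hy0 hy
  have hy11 : y1 ≤ 1 := le_trans hy hy2
  rcases le_total l (y1 * (1 - x2)) with h1 | h1
  · have eB := nR1 l x2 y1 hx10 hx2 hy0 hy11 h1
    have eA := nR1 l x1 y1 hx0 hx11 hy0 hy11 (by nlinarith)
    have eC := nR1 l x1 y2 hx0 hx11 hy10 hy2 (by nlinarith)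
    have eD := nR1 l x2 y2 hx10 hx2 hy10 hy2 (by nlinarith)
    rw [eA, eB, eC, eD]
    nlinarith [mul_nonneg (sub_nonneg.2 hx) (sub_nonneg.2 hy)]
  · rcases le_total (y2 * (1 - x1)) l with h3 | h3
    · have eB := nR2 l x2 y1 h1
      have eA := nR2 l x1 y1 (by nlinarith)
      have eC := nR2 l x1 y2 h3
      have eD := nR2 l x2 y2 (by nlinarith)
      rw [eA, eB, eC, eD]
      have := Gsuper l x1 x2 y1 y2 hx hy
      linarith
    · have eB := nR2 l x2 y1 h1
      have eC := nR1 l x1 y2 hx0 hx11 hy10 hy2 h3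
      rcases le_total l (y1 * (1 - x1)) with hA | hA
      · have eA := nR1 l x1 y1 hx0 hx11 hy0 hy11 hA
        rcases le_total l (y2 * (1 - x2)) with hD | hD
        · have eD := nR1 l x2 y2 hx10 hx2 hy10 hy2 hD
          rw [eA, eB, eC, eD]
          have hBle : Gfun l x2 y1 ≤ x2 * y1 := by
            unfold Gfun
            apply max_le (max_le (by nlinarith) (by nlinarith)) (mul_nonneg hx10 hy0)
          nlinarith [mul_nonneg (sub_nonneg.2 hx) (sub_nonneg.2 hy)]
        · have eD := nR2 l x2 y2 hD
          rw [eA, eB, eC, eD]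
          rcases le_total (max (x2 + y1 - 1) (y1 - l)) 0 with hB0 | hB0
          · have eBv : Gfun l x2 y1 = 0 := max_eq_right hB0
            rw [eBv]
            nlinarith [G_ge2 l x2 y2, mul_nonneg hx0 hy0]
          · have eBv : Gfun l x2 y1 = max (x2 + y1 - 1) (y1 - l) := max_eq_left hB0
            rw [eBv]
            rcases le_total (x2 + y1 - 1) (y1 - l) with hb | hb
            · rw [max_eq_right hb]
              nlinarith [G_ge2 l x2 y2, mul_nonneg (sub_nonneg.2 hx11) (sub_nonneg.2 hy)]
            · rw [max_eq_left hb]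
              nlinarith [G_ge1 l x2 y2, mul_nonneg (sub_nonneg.2 hx11) (sub_nonneg.2 hy)]
      · have eA := nR2 l x1 y1 hA
        rcases le_total l (y2 * (1 - x2)) with hD | hD
        · have eD := nR1 l x2 y2 hx10 hx2 hy10 hy2 hD
          rw [eA, eB, eC, eD]
          rcases le_total (max (x2 + y1 - 1) (y1 - l)) 0 with hB0 | hB0
          · have eBv : Gfun l x2 y1 = 0 := max_eq_right hB0
            rw [eBv]
            nlinarith [G_ge0 l x1 y1, mul_nonneg (sub_nonneg.2 hx) hy10]
          · have eBv : Gfun l x2 y1 = max (x2 + y1 - 1) (y1 - l) := max_eq_left hB0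
            rw [eBv]
            rcases le_total (x2 + y1 - 1) (y1 - l) with hb | hb
            · rw [max_eq_right hb]
              nlinarith [G_ge2 l x1 y1, mul_nonneg (sub_nonneg.2 hx) hy10]
            · rw [max_eq_left hb]
              nlinarith [G_ge2 l x1 y1, hD,
                mul_nonneg (sub_nonneg.2 hx2) (sub_nonneg.2 hy2),
                mul_nonneg (sub_nonneg.2 hx) hy10]
        · have eD := nR2 l x2 y2 hD
          rw [eA, eB, eC, eD]
          have hCle : x1 * y2 ≤ Gfun l x1 y2 := le_trans (by nlinarith) (G_ge2 l x1 y2)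
          have := Gsuper l x1 x2 y1 y2 hx hy
          linarith

/-- The asymmetry computation along the lines `x + y = 1 ± μ`, for `x ≤ y`. -/
lemma asym (l μ x y : ℝ) (hl0 : 0 ≤ l) (hlh : l ≤ 1/2)
    (hμ : μ * (1 - l) = 1 - 3*l + l^2) (hμ0 : 0 ≤ μ) (hμ1 : μ ≤ 1)
    (hx0 : 0 ≤ x) (hy1 : y ≤ 1) (hxy : x ≤ y)
    (habs : x + y - 1 = μ ∨ x + y - 1 = -μ) :
    Nlam l x y - Nlam l y x = min (x*y) (min ((1-x)*(1-y)) (y-x)) := by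
  have hy0 : 0 ≤ y := le_trans hx0 hxy
  have hx1 : x ≤ 1 := le_trans hxy hy1
  have key1 : (1-l)*(1-l-μ) = l := by linear_combination -hμ
  have e1 : (1-μ)*(1-l) = 2*l - l^2 := by linear_combination -hμ
  have e2 : (1+μ)*(1-l) = 2 - 4*l + l^2 := by linear_combination hμ
  have hL : (0:ℝ) < 1 - l := by linarith
  have e3 : (1-μ^2)*((1-l)*(1-l)) = (2*l-l^2)*(2-4*l+l^2) := by
    linear_combination ((1+μ)*(1-l))*e1 + (2*l-l^2)*e2
  have key2 : 1 - μ^2 ≤ 4*l := by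
    nlinarith [e3, mul_pos hL hL, sq_nonneg (l - l^2), sq_nonneg l, hl0]
  have hμl : 0 ≤ 1 - l - μ := by nlinarith [key1, hl0, hL]
  have e4 : (1-μ-2*l)*(1-l) = l^2 := by linear_combination -hμ
  have h2l : 2*l ≤ 1 - μ := by nlinarith [e4, sq_nonneg l]
  rcases habs with hs | hs
  · -- x + y = 1 + μ
    have hxμ : μ ≤ x := by linarith
    rcases le_total x (l + μ) with hcase | hcase
    · have hy1l : 1 - l ≤ y := by linarith
      have hr : l ≤ y * (1 - x) := by
        have := mul_le_mul hy1l (by linarith : 1 - l - μ ≤ 1 - x) hμl (by linarith : (0:ℝ) ≤ y)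
        linarith [key1]
      have hNxy : Nlam l x y = x * y := nR1 l x y hx0 hx1 hy0 hy1 hr
      have hNyx : Nlam l y x = μ := by
        have hm : min (x - l) (y * x) ≤ μ := le_trans (min_le_left _ _) (by linarith)
        show max (max (y + x - 1) 0) (min (x - l) (y * x)) = μ
        rw [show y + x - 1 = μ by linarith, max_eq_left hμ0]
        exact max_eq_left hm
      rw [hNxy, hNyx]
      have e : (1-x)*(1-y) = x*y - μ := by linear_combination -hs
      have id1 : (y - x) - (x*y - μ) = (l+μ-x)*(3-l-x) := by
        linear_combination (1-x)*hs - hμ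
      have hle1 : x*y - μ ≤ y - x := by
        nlinarith [id1, mul_nonneg (by linarith : (0:ℝ) ≤ l+μ-x) (by linarith : (0:ℝ) ≤ 3-l-x)]
      have hle2 : x*y - μ ≤ x*y := by linarith
      rw [e, min_eq_left hle1, min_eq_right hle2]
    · have hy1l : y ≤ 1 - l := by linarith
      have hxm : x ≤ (1+μ)/2 := by linarith
      have hr1 : y * (1 - x) ≤ l := by
        have := mul_le_mul hy1l (by linarith : 1 - x ≤ 1 - l - μ) (by linarith : (0:ℝ) ≤ 1 - x)
          (by linarith : (0:ℝ) ≤ 1 - l)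
        linarith [key1]
      have hr2 : x * (1 - y) ≤ l := by
        have h1y : 1 - y = x - μ := by linarith
        have := mul_le_mul hxm (by linarith : x - μ ≤ (1-μ)/2) (by linarith : (0:ℝ) ≤ x - μ)
          (by linarith : (0:ℝ) ≤ (1+μ)/2)
        rw [h1y]; nlinarith [key2]
      have hNxy : Nlam l x y = y - l := by
        show max (max (x + y - 1) 0) (min (y - l) (x * y)) = y - l
        rw [min_eq_left (by nlinarith [hr1] : y - l ≤ x*y)]
        exact max_eq_right (max_le (by linarith) (by linarith))
      have hNyx : Nlam l y x = x - l := by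
        show max (max (y + x - 1) 0) (min (x - l) (y * x)) = x - l
        rw [min_eq_left (by nlinarith [hr2] : x - l ≤ y*x)]
        exact max_eq_right (max_le (by linarith) (by linarith))
      rw [hNxy, hNyx]
      have e : (1-x)*(1-y) = x*y - μ := by linear_combination -hs
      have id1 : (x*y - μ) - (y - x) = (x-l-μ)*(3-l-x) := by
        linear_combination hμ - (1-x)*hs
      have hle1 : y - x ≤ x*y - μ := by
        nlinarith [id1, mul_nonneg (by linarith : (0:ℝ) ≤ x-l-μ) (by linarith : (0:ℝ) ≤ 3-l-x)]
      have hle2 : y - x ≤ x*y := by linarith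
      rw [e, min_eq_right hle1, min_eq_right hle2]
      ring
  · -- x + y = 1 - μ
    have hyl : l ≤ y := by linarith
    rcases le_total x l with hc | hc
    · have hyb : 1 - μ - l ≤ y := by linarith
      have hr : l ≤ y * (1 - x) := by
        have := mul_le_mul hyb (by linarith : 1 - l ≤ 1 - x) (by linarith : (0:ℝ) ≤ 1 - l)
          (by linarith : (0:ℝ) ≤ y)
        nlinarith [key1]
      have hNxy := nR1 l x y hx0 hx1 hy0 hy1 hr
      have hNyx : Nlam l y x = 0 := by
        show max (max (y + x - 1) 0) (min (x - l) (y * x)) = 0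
        rw [max_eq_right (by linarith : y + x - 1 ≤ 0)]
        exact max_eq_left (le_trans (min_le_left _ _) (by linarith))
      rw [hNxy, hNyx, sub_zero]
      have e : (1-x)*(1-y) = x*y + μ := by linear_combination -hs
      have id1 : (y - x) - x*y = (l-x)*(3-μ-x-l) := by
        linear_combination (1-x)*hs - hμ
      have hle1 : x*y ≤ y - x := by
        nlinarith [id1, mul_nonneg (by linarith : (0:ℝ) ≤ l-x) (by linarith : (0:ℝ) ≤ 3-μ-x-l)]
      rw [e]
      exact (min_eq_left (le_min (by linarith) hle1)).symm
    · have hyb : y ≤ 1 - μ - l := by linarith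
      have hr1 : y * (1 - x) ≤ l := by
        have := mul_le_mul hyb (by linarith : 1 - x ≤ 1 - l) (by linarith : (0:ℝ) ≤ 1 - x)
          (by linarith : (0:ℝ) ≤ 1 - μ - l)
        nlinarith [key1]
      have hr2 : x * (1 - y) ≤ l := by
        have hxm : x ≤ (1-μ)/2 := by linarith
        have h1y : 1 - y = x + μ := by linarith
        have := mul_le_mul hxm (by linarith : x + μ ≤ (1+μ)/2) (by linarith : (0:ℝ) ≤ x + μ)
          (by linarith : (0:ℝ) ≤ (1-μ)/2)
        rw [h1y]; nlinarith [key2]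
      have hNxy : Nlam l x y = y - l := by
        show max (max (x + y - 1) 0) (min (y - l) (x * y)) = y - l
        rw [min_eq_left (by nlinarith [hr1] : y - l ≤ x*y)]
        exact max_eq_right (max_le (by linarith) (by linarith))
      have hNyx : Nlam l y x = x - l := by
        show max (max (y + x - 1) 0) (min (x - l) (y * x)) = x - l
        rw [min_eq_left (by nlinarith [hr2] : x - l ≤ y*x)]
        exact max_eq_right (max_le (by linarith) (by linarith))
      rw [hNxy, hNyx]
      have e : (1-x)*(1-y) = x*y + μ := by linear_combination -hs
      have id1 : (y - x) - x*y = (l-x)*(3-μ-x-l) := by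
        linear_combination (1-x)*hs - hμ
      have hle1 : y - x ≤ x*y := by
        nlinarith [id1, mul_nonneg (by linarith : (0:ℝ) ≤ x-l) (by linarith : (0:ℝ) ≤ 3-μ-x-l)]
      rw [e, min_eq_right (by linarith : y - x ≤ x*y + μ), min_eq_right hle1]
      ring

theorem Nlam_attains_nqd_bound (l : ℝ) (hl0 : 0 ≤ l) (hl1 : l ≤ (3 - Real.sqrt 5) / 2) :
    IsCopula (Nlam l) ∧
    (∀ x ∈ Set.Icc (0:ℝ) 1, ∀ y ∈ Set.Icc (0:ℝ) 1, Nlam l x y ≤ x * y) ∧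
    (1 - 3 * l + l ^ 2) / (1 - l) ∈ Set.Icc (0:ℝ) 1 ∧
    (∀ x ∈ Set.Icc (0:ℝ) 1, ∀ y ∈ Set.Icc (0:ℝ) 1,
      |x + y - 1| = (1 - 3 * l + l ^ 2) / (1 - l) →
      |Nlam l x y - Nlam l y x| = min (x * y) (min ((1 - x) * (1 - y)) |x - y|)) := by
  have hs5 : Real.sqrt 5 ^ 2 = 5 := Real.sq_sqrt (by norm_num)
  have hs5n : (0:ℝ) ≤ Real.sqrt 5 := Real.sqrt_nonneg 5
  have hlh : l ≤ 1/2 := by nlinarith [hs5, hs5n, hl1]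
  have ha : 0 ≤ 1 - 3*l + l^2 := by
    nlinarith [hs5, hs5n, hl1, mul_nonneg (by linarith : (0:ℝ) ≤ 3 - 2*l - Real.sqrt 5) hs5n]
  have hL : (0:ℝ) < 1 - l := by linarith
  have hμ0 : 0 ≤ (1 - 3*l + l^2)/(1-l) := div_nonneg ha (le_of_lt hL)
  have hμ1 : (1 - 3*l + l^2)/(1-l) ≤ 1 := by
    rw [div_le_one hL]; nlinarith
  have hμ : ((1 - 3*l + l^2)/(1-l)) * (1 - l) = 1 - 3*l + l^2 := div_mul_cancel₀ _ (ne_of_gt hL)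
  have hnqd : ∀ x ∈ Set.Icc (0:ℝ) 1, ∀ y ∈ Set.Icc (0:ℝ) 1, Nlam l x y ≤ x * y := by
    intro x hx y hy
    show max (max (x + y - 1) 0) (min (y - l) (x * y)) ≤ x * y
    exact max_le (max_le (by nlinarith [hx.1, hx.2, hy.1, hy.2])
      (mul_nonneg hx.1 hy.1)) (min_le_right _ _)
  refine ⟨⟨?_, ?_, ?_⟩, hnqd, ⟨hμ0, hμ1⟩, ?_⟩
  · -- range
    intro x hx y hy
    constructor
    · show (0:ℝ) ≤ max (max (x + y - 1) 0) (min (y - l) (x * y))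
      exact le_trans (le_max_right (x + y - 1) 0) (le_max_left _ _)
    · exact le_trans (hnqd x hx y hy) (by nlinarith [hx.1, hx.2, hy.1, hy.2])
  · -- boundary
    intro x hx
    obtain ⟨hx0, hx1⟩ := hx
    refine ⟨?_, ?_, ?_, ?_⟩
    · show max (max (x + 0 - 1) 0) (min (0 - l) (x * 0)) = 0
      rw [max_eq_right (by linarith : x + 0 - 1 ≤ 0)]
      exact max_eq_left (le_trans (min_le_right _ _) (by rw [mul_zero]))
    · show max (max (0 + x - 1) 0) (min (x - l) (0 * x)) = 0
      rw [max_eq_right (by linarith : 0 + x - 1 ≤ 0)]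
      exact max_eq_left (le_trans (min_le_right _ _) (by rw [zero_mul]))
    · show max (max (x + 1 - 1) 0) (min (1 - l) (x * 1)) = x
      rw [show x + 1 - 1 = x by ring, max_eq_left hx0, mul_one]
      exact max_eq_left (min_le_right _ _)
    · show max (max (1 + x - 1) 0) (min (x - l) (1 * x)) = x
      rw [show 1 + x - 1 = x by ring, max_eq_left hx0, one_mul]
      exact max_eq_left (le_trans (min_le_left _ _) (by linarith))
  · -- 2-increasing
    intro x1 x2 y1 y2 h1 h2 h3 h4 h5 h6
    exact key2incr l x1 x2 y1 y2 h1 h2 h3 h4 h5 h6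
  · -- asymmetry attainment
    intro x hx y hy habs
    have habs' := (abs_eq hμ0).mp habs
    rcases le_total x y with hxy | hxy
    · have h := asym l _ x y hl0 hlh hμ hμ0 hμ1 hx.1 hy.2 hxy habs'
      have hmin0 : 0 ≤ min (x*y) (min ((1-x)*(1-y)) (y-x)) :=
        le_min (mul_nonneg hx.1 hy.1)
          (le_min (mul_nonneg (by linarith [hx.2]) (by linarith [hy.2])) (by linarith))
      rw [show |x - y| = y - x by rw [abs_of_nonpos (by linarith)]; ring, h]
      exact abs_of_nonneg hmin0
    · have habs'' : y + x - 1 = (1 - 3*l + l^2)/(1-l) ∨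
          y + x - 1 = -((1 - 3*l + l^2)/(1-l)) := by
        rcases habs' with h | h
        · left; linarith
        · right; linarith
      have h := asym l _ y x hl0 hlh hμ hμ0 hμ1 hy.1 hx.2 hxy habs''
      have hmin0 : 0 ≤ min (y*x) (min ((1-y)*(1-x)) (x-y)) :=
        le_min (mul_nonneg hy.1 hx.1)
          (le_min (mul_nonneg (by linarith [hy.2]) (by linarith [hx.2])) (by linarith))
      rw [abs_sub_comm, show |x - y| = x - y from abs_of_nonneg (by linarith),
        mul_comm x y, show (1-x)*(1-y) = (1-y)*(1-x) from mul_comm _ _, h]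
      exact abs_of_nonneg hmin0
end

section
/- Let f,g : [0,1] → [0,1] be nondecreasing with f(0) = g(0) = 0, f(1) = g(1) = 1, such that x ↦ f(x)/x and x ↦ g(x)/x are nonincreasing on (0,1], and let C(x,y) = min{y·f(x), x·g(y)} be the associated Marshall copula. Then for all x,y ∈ [0,1] with x ≤ y one has |C(x,y) − C(y,x)| ≤ F(x,y), where F(x,y) = x(1−y) if x ≤ y² and F(x,y) = x(y−x)/y if x > y². -/
lemma marshall_asymmetry_aux (f g : ℝ → ℝ)
    (hf01 : ∀ x ∈ Set.Icc (0:ℝ) 1, f x ∈ Set.Icc (0:ℝ) 1)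
    (hg01 : ∀ x ∈ Set.Icc (0:ℝ) 1, g x ∈ Set.Icc (0:ℝ) 1)
    (hfmono : MonotoneOn f (Set.Icc 0 1)) (hgmono : MonotoneOn g (Set.Icc 0 1))
    (hf0 : f 0 = 0) (hg0 : g 0 = 0) (hf1 : f 1 = 1) (hg1 : g 1 = 1)
    (hfstar : AntitoneOn (fun x => f x / x) (Set.Ioc 0 1))
    (hgstar : AntitoneOn (fun x => g x / x) (Set.Ioc 0 1)) :
    ∀ x y : ℝ, 0 ≤ x → x ≤ y → y ≤ 1 →
      min (y * f x) (x * g y) - min (x * f y) (y * g x)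
        ≤ if x ≤ y ^ 2 then x * (1 - y) else x * (y - x) / y := by
  intro x y hx hxy hy1
  rcases eq_or_lt_of_le hx with hx0 | hx0
  · subst hx0
    rw [if_pos (by positivity)]
    simp [hf0, hg0]
  · have hy0 : (0:ℝ) < y := lt_of_lt_of_le hx0 hxy
    have hxI : x ∈ Set.Icc (0:ℝ) 1 := ⟨hx, hxy.trans hy1⟩
    have hyI : y ∈ Set.Icc (0:ℝ) 1 := ⟨hy0.le, hy1⟩
    have hxJ : x ∈ Set.Ioc (0:ℝ) 1 := ⟨hx0, hxI.2⟩
    have hyJ : y ∈ Set.Ioc (0:ℝ) 1 := ⟨hy0, hy1⟩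
    have h1J : (1:ℝ) ∈ Set.Ioc (0:ℝ) 1 := ⟨zero_lt_one, le_refl 1⟩
    -- basic bounds
    have ha1 : f x ≤ 1 := (hf01 x hxI).2
    have hb1 : f y ≤ 1 := (hf01 y hyI).2
    have hc1 : g x ≤ 1 := (hg01 x hxI).2
    have hd1 : g y ≤ 1 := (hg01 y hyI).2
    have hax : x ≤ f x := by
      have := hfstar hxJ h1J hxI.2
      simp only [hf1] at this
      rw [div_le_div_iff₀ one_pos hx0] at this
      linarith
    have hby : y ≤ f y := by
      have := hfstar hyJ h1J hy1
      simp only [hf1] at this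
      rw [div_le_div_iff₀ one_pos hy0] at this
      linarith
    have hcx : x ≤ g x := by
      have := hgstar hxJ h1J hxI.2
      simp only [hg1] at this
      rw [div_le_div_iff₀ one_pos hx0] at this
      linarith
    have hdy : y ≤ g y := by
      have := hgstar hyJ h1J hy1
      simp only [hg1] at this
      rw [div_le_div_iff₀ one_pos hy0] at this
      linarith
    have hab : f x ≤ f y := hfmono hxI hyI hxy
    have hcd : g x ≤ g y := hgmono hxI hyI hxy
    have hfs : x * f y ≤ y * f x := by
      have := hfstar hxJ hyJ hxy
      simp only [] at this
      rw [div_le_div_iff₀ hy0 hx0] at this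
      linarith
    have hgs : x * g y ≤ y * g x := by
      have := hgstar hxJ hyJ hxy
      simp only [] at this
      rw [div_le_div_iff₀ hy0 hx0] at this
      linarith
    by_cases hcase : x ≤ y ^ 2
    · rw [if_pos hcase]
      have h1 : min (y * f x) (x * g y) ≤ x * g y := min_le_right _ _
      have h2 : x * y ≤ min (x * f y) (y * g x) := by
        apply le_min
        · nlinarith
        · nlinarith
      nlinarith
    · rw [if_neg hcase]
      rw [le_div_iff₀ hy0]
      rcases le_total (x * f y) (y * g x) with h | h
      · rw [min_eq_left h]
        rcases le_total (y * f x) (x * g y) with h2 | h2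
        · rw [min_eq_left h2]
          -- (y·a − x·b)·y ≤ x·(y−x), using y·a ≤ x·d ≤ x and b ≥ a
          have key : y * f x ≤ x := h2.trans (by nlinarith)
          have p1 := mul_le_mul_of_nonneg_right key (sub_nonneg.2 hxy)
          have p2 := mul_le_mul_of_nonneg_left hab hx
          have p3 := mul_le_mul_of_nonneg_right p2 hy0.le
          nlinarith [p1, p3]
        · rw [min_eq_right h2]
          -- (x·d − x·b)·y ≤ x·(y−x), using y·b ≥ y·a ≥ x·d and d ≤ 1
          have key : x * g y ≤ y * f y := by nlinarith
          have p1 := mul_le_mul_of_nonneg_left key hx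
          have p2 := mul_le_mul_of_nonneg_left hd1 (mul_nonneg hx (sub_nonneg.2 hxy))
          nlinarith [p1, p2]
      · rw [min_eq_right h]
        have h1 : min (y * f x) (x * g y) ≤ y * g x := (min_le_right _ _).trans hgs
        nlinarith

/-- Lemma 4.1: for a Marshall copula `C(x,y) = min{y·f(x), x·g(y)}`
and `0 ≤ x ≤ y ≤ 1`, `|C(x,y) − C(y,x)| ≤ F(x,y)`, where `F(x,y) = x(1−y)` if `x ≤ y²`
and `F(x,y) = x(y−x)/y` otherwise. -/
theorem marshall_asymmetry_pointwise_bound (f g : ℝ → ℝ)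
    (hf01 : ∀ x ∈ Set.Icc (0:ℝ) 1, f x ∈ Set.Icc (0:ℝ) 1)
    (hg01 : ∀ x ∈ Set.Icc (0:ℝ) 1, g x ∈ Set.Icc (0:ℝ) 1)
    (hfmono : MonotoneOn f (Set.Icc 0 1)) (hgmono : MonotoneOn g (Set.Icc 0 1))
    (hf0 : f 0 = 0) (hg0 : g 0 = 0) (hf1 : f 1 = 1) (hg1 : g 1 = 1)
    (hfstar : AntitoneOn (fun x => f x / x) (Set.Ioc 0 1))
    (hgstar : AntitoneOn (fun x => g x / x) (Set.Ioc 0 1))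
    (C : ℝ → ℝ → ℝ) (hC : ∀ x y, C x y = min (y * f x) (x * g y)) :
    ∀ x y : ℝ, 0 ≤ x → x ≤ y → y ≤ 1 →
      |C x y - C y x| ≤ if x ≤ y ^ 2 then x * (1 - y) else x * (y - x) / y := by
  intro x y hx hxy hy1
  rw [abs_sub_le_iff, hC, hC]
  constructor
  · exact marshall_asymmetry_aux f g hf01 hg01 hfmono hgmono hf0 hg0 hf1 hg1
      hfstar hgstar x y hx hxy hy1
  · rw [min_comm (x * f y) (y * g x), min_comm (y * f x) (x * g y)]
    exact marshall_asymmetry_aux g f hg01 hf01 hgmono hfmono hg0 hf0 hg1 hf1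
      hgstar hfstar x y hx hxy hy1
end

section
/- For μ ∈ (0,1) define C_μ : [0,1]² → [0,1] by C_μ(x,y) = x if 0 ≤ x ≤ μy; C_μ(x,y) = μy if μy ≤ x ≤ μ; and C_μ(x,y) = xy if μ ≤ x ≤ 1. Then C_μ(x,y) = min{y·f_μ(x), x·g(y)}, where f_μ(0) = 0, f_μ(x) = μ for 0 < x ≤ μ, f_μ(x) = x for x > μ, and g(0) = 0, g(y) = 1 for y > 0 (so C_μ is a Marshall copula), and for all 0 ≤ x ≤ y ≤ 1: |C_μ(x,y) − C_μ(y,x)| = x(1−μ) if 0 ≤ x ≤ μy and 0 ≤ y ≤ μ; = x(1−y) if 0 ≤ x ≤ μy and μ ≤ y ≤ 1; = μ(y−x) if μy ≤ x ≤ y and 0 ≤ y ≤ μ; = y(μ−x) if μy ≤ x ≤ μ and μ ≤ y ≤ 1; and = 0 if μ ≤ x ≤ y ≤ 1. -/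
/-- The Marshall copula `C_μ` (ordinal sum of `M` and `Π`). -/
noncomputable def Cmu (μ : ℝ) : ℝ → ℝ → ℝ := fun x y =>
  if x ≤ μ * y then x else if x ≤ μ then μ * y else x * y

/-- Generator `f_μ`: `f_μ(0) = 0`, `f_μ(x) = μ` for `0 < x ≤ μ`, `f_μ(x) = x` for `x > μ`. -/
noncomputable def fmu (μ : ℝ) : ℝ → ℝ := fun x =>
  if x = 0 then 0 else if x ≤ μ then μ else x

/-- Generator `g`: `g(0) = 0`, `g(y) = 1` for `y > 0`. -/
noncomputable def gmu : ℝ → ℝ := fun y => if y = 0 then 0 else 1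

set_option maxHeartbeats 2000000 in
/-- `C_μ(x,y) = min{y·f_μ(x), x·g(y)}` on `[0,1]²` (so `C_μ` is a
Marshall copula), and the explicit piecewise formula for `|C_μ(x,y) − C_μ(y,x)|`
holds for all `0 ≤ x ≤ y ≤ 1`. -/
theorem Cmu_marshall_and_asymmetry (μ : ℝ) (hμ0 : 0 < μ) (hμ1 : μ < 1) :
    (∀ x ∈ Set.Icc (0:ℝ) 1, ∀ y ∈ Set.Icc (0:ℝ) 1,
      Cmu μ x y = min (y * fmu μ x) (x * gmu y)) ∧
    (∀ x y : ℝ, 0 ≤ x → x ≤ y → y ≤ 1 →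
      ((x ≤ μ * y → y ≤ μ → |Cmu μ x y - Cmu μ y x| = x * (1 - μ)) ∧
       (x ≤ μ * y → μ ≤ y → |Cmu μ x y - Cmu μ y x| = x * (1 - y)) ∧
       (μ * y ≤ x → y ≤ μ → |Cmu μ x y - Cmu μ y x| = μ * (y - x)) ∧
       (μ * y ≤ x → x ≤ μ → μ ≤ y → |Cmu μ x y - Cmu μ y x| = y * (μ - x)) ∧
       (μ ≤ x → |Cmu μ x y - Cmu μ y x| = 0))) := by
  constructor
  · rintro x ⟨hx0, hx1⟩ y ⟨hy0, hy1⟩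
    unfold Cmu fmu gmu
    split_ifs <;> rw [min_def] <;> split_ifs <;>
      first
      | linarith
      | nlinarith [mul_nonneg hx0 hy0, mul_nonneg hμ0.le hy0, mul_nonneg hμ0.le hx0]
      | (ring_nf; nlinarith [mul_nonneg hx0 hy0, mul_nonneg hμ0.le hy0, mul_nonneg hμ0.le hx0])
  · intro x y hx hxy hy1
    refine ⟨fun h1 h2 => ?_, fun h1 h2 => ?_, fun h1 h2 => ?_, fun h1 h2 h3 => ?_,
      fun h1 => ?_⟩
    · have e1 : Cmu μ x y = x := by simp [Cmu, if_pos h1]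
      by_cases h3 : y ≤ μ * x
      · have hx0 : x = 0 := by nlinarith
        have hy0 : y = 0 := by nlinarith
        norm_num [Cmu, hx0, hy0]
      · have e2 : Cmu μ y x = μ * x := by simp [Cmu, h3, h2]
        rw [e1, e2, abs_of_nonneg (by nlinarith)]; ring
    · have e1 : Cmu μ x y = x := by simp [Cmu, if_pos h1]
      have h3 : ¬ (y ≤ μ * x) := by nlinarith
      by_cases h4 : y ≤ μ
      · have hyμ : y = μ := le_antisymm h4 h2
        have e2 : Cmu μ y x = μ * x := by simp [Cmu, h3, h4]
        rw [e1, e2, abs_of_nonneg (by nlinarith), hyμ]; ring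
      · have e2 : Cmu μ y x = y * x := by simp [Cmu, h3, h4]
        rw [e1, e2, abs_of_nonneg (by nlinarith)]; ring
    · have e1 : Cmu μ x y = μ * y := by
        have hxμ : x ≤ μ := hxy.trans h2
        unfold Cmu; split_ifs with hb hc <;> first | rfl | linarith
      by_cases h3 : y ≤ μ * x
      · have hy0 : y = 0 := by nlinarith
        have hx0 : x = 0 := by nlinarith
        norm_num [Cmu, hx0, hy0]
      · have e2 : Cmu μ y x = μ * x := by simp [Cmu, h3, h2]
        rw [e1, e2, abs_of_nonneg (by nlinarith)]; ring
    · have e1 : Cmu μ x y = μ * y := by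
        unfold Cmu; split_ifs with hb hc <;> first | rfl | linarith
      have h4 : ¬ (y ≤ μ * x) := by nlinarith
      by_cases h5 : y ≤ μ
      · have hyμ : y = μ := le_antisymm h5 h3
        have e2 : Cmu μ y x = μ * x := by simp [Cmu, h4, h5]
        rw [e1, e2, abs_of_nonneg (by nlinarith), hyμ]; ring
      · have e2 : Cmu μ y x = y * x := by simp [Cmu, h4, h5]
        rw [e1, e2, abs_of_nonneg (by nlinarith)]; ring
    · have e1 : Cmu μ x y = x * y := by
        unfold Cmu; split_ifs with hb hc
        · have hy : y = 1 := by nlinarith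
          rw [hy]; ring
        · have hxμ : x = μ := le_antisymm hc h1
          rw [hxμ]
        · rfl
      have e2 : Cmu μ y x = x * y := by
        unfold Cmu; split_ifs with hb hc
        · nlinarith
        · have hyμ : y = μ := le_antisymm hc (h1.trans hxy)
          have hxμ : x = μ := le_antisymm ((hxy.trans hc)) h1
          rw [hyμ, hxμ]
        · ring
      rw [e1, e2]; simp
end

section
/- For every Marshall copula C and all x,y ∈ [0,1] one has |C(x,y) − C(y,x)| ≤ 4/27, and this bound is sharp over the class of Marshall copulas. Moreover, for every (x,y) ∈ [0,1]², the supremum of the set {|C(x,y) − C(y,x)| : C a Marshall copula} equals d*(x,y), where d*(x,y) = x(1−y) if x ≤ y²; d*(x,y) = (x/y)(y−x) if y² ≤ x ≤ y; d*(x,y) = y(1−x) if y ≤ x²; and d*(x,y) = (y/x)(x−y) if x² ≤ y ≤ x. -/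
/-- A Marshall copula: `C(x,y) = min{y·f(x), x·g(y)}` on `[0,1]²` for some nondecreasing
generators `f, g : [0,1] → [0,1]` with `f(0) = g(0) = 0`, `f(1) = g(1) = 1`, and
`f(x)/x`, `g(x)/x` nonincreasing on `(0,1]`. -/
def IsMarshallCopula (C : ℝ → ℝ → ℝ) : Prop :=
  ∃ f g : ℝ → ℝ,
    (∀ x ∈ Set.Icc (0:ℝ) 1, f x ∈ Set.Icc (0:ℝ) 1) ∧
    (∀ x ∈ Set.Icc (0:ℝ) 1, g x ∈ Set.Icc (0:ℝ) 1) ∧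
    MonotoneOn f (Set.Icc 0 1) ∧ MonotoneOn g (Set.Icc 0 1) ∧
    f 0 = 0 ∧ g 0 = 0 ∧ f 1 = 1 ∧ g 1 = 1 ∧
    AntitoneOn (fun x => f x / x) (Set.Ioc 0 1) ∧
    AntitoneOn (fun x => g x / x) (Set.Ioc 0 1) ∧
    (∀ x ∈ Set.Icc (0:ℝ) 1, ∀ y ∈ Set.Icc (0:ℝ) 1, C x y = min (y * f x) (x * g y))

/-- The maximal asymmetry function `d*` of the family of Marshall copulas. -/
noncomputable def dstarMarshall (x y : ℝ) : ℝ :=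
  if x ≤ y then (if x ≤ y ^ 2 then x * (1 - y) else x / y * (y - x))
  else (if y ≤ x ^ 2 then y * (1 - x) else y / x * (x - y))

/-!
For `x ≤ y` put `s = max y (x / y)`, so that `d*(x, y) = x (1 - s)`. Generators dominate the
identity, are bounded by `1` and satisfy `x g(y) ≤ y g(x)`; hence `C(x,y) ≤ x`, `C(y,x) ≥ x y`
and `C(y,x) ≥ x min(f x, g y)`, which bound `C(x,y) - C(y,x)` by `x (1 - y)` and by
`x (1 - x / y)`. Both bounds are attained at once by the generators `t ↦ min(max(t, s), t / y)`
and `t ↦ min(t / y, 1)`, for which `C(x,y) = x` and `C(y,x) = x s`. Finally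
`x = y (x / y) ≤ s²` gives `d* ≤ s² (1 - s) ≤ 4/27`, with equality at `(4/9, 2/3)`.
-/

open Set

structure IsMarshallGenerator (f : ℝ → ℝ) : Prop where
  mapsTo : MapsTo f (Icc 0 1) (Icc 0 1)
  monotoneOn : MonotoneOn f (Icc 0 1)
  map_zero : f 0 = 0
  map_one : f 1 = 1
  antitoneOn_div : AntitoneOn (fun x => f x / x) (Ioc 0 1)

def marshallCopula (f g : ℝ → ℝ) (x y : ℝ) : ℝ := min (y * f x) (x * g y)

theorem marshallCopula_swap (f g : ℝ → ℝ) (x y : ℝ) :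
    marshallCopula g f y x = marshallCopula f g x y :=
  min_comm _ _

theorem isMarshallCopula_iff {C : ℝ → ℝ → ℝ} :
    IsMarshallCopula C ↔ ∃ f g, IsMarshallGenerator f ∧ IsMarshallGenerator g ∧
      ∀ x ∈ Icc (0 : ℝ) 1, ∀ y ∈ Icc (0 : ℝ) 1, C x y = marshallCopula f g x y := by
  constructor
  · rintro ⟨f, g, hfI, hgI, hfm, hgm, hf0, hg0, hf1, hg1, hfa, hga, hC⟩
    exact ⟨f, g, ⟨hfI, hfm, hf0, hf1, hfa⟩, ⟨hgI, hgm, hg0, hg1, hga⟩, hC⟩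
  · rintro ⟨f, g, ⟨hfI, hfm, hf0, hf1, hfa⟩, ⟨hgI, hgm, hg0, hg1, hga⟩, hC⟩
    exact ⟨f, g, hfI, hgI, hfm, hgm, hf0, hg0, hf1, hg1, hfa, hga, hC⟩

namespace IsMarshallGenerator

variable {f : ℝ → ℝ}

theorem mul_apply_le_mul_apply (hf : IsMarshallGenerator f) {x y : ℝ} (hx : 0 ≤ x)
    (hxy : x ≤ y) (hy : y ≤ 1) : x * f y ≤ y * f x := by
  rcases hx.eq_or_lt with rfl | hx
  · simp [hf.map_zero]
  have hy0 := hx.trans_le hxy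
  have := hf.antitoneOn_div ⟨hx, hxy.trans hy⟩ ⟨hy0, hy⟩ hxy
  rw [div_le_div_iff₀ hy0 hx] at this
  linarith

theorem le_apply (hf : IsMarshallGenerator f) {x : ℝ} (hx : x ∈ Icc (0 : ℝ) 1) : x ≤ f x := by
  simpa [hf.map_one] using hf.mul_apply_le_mul_apply hx.1 hx.2 le_rfl

end IsMarshallGenerator

theorem dstarMarshall_symm (x y : ℝ) : dstarMarshall x y = dstarMarshall y x := by
  unfold dstarMarshall
  rcases lt_trichotomy x y with h | rfl | h
  · rw [if_pos h.le, if_neg h.not_ge]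
  · rfl
  · rw [if_neg h.not_ge, if_pos h.le]

theorem dstarMarshall_eq {x y : ℝ} (hx : 0 ≤ x) (hxy : x ≤ y) :
    dstarMarshall x y = x * (1 - max y (x / y)) := by
  rw [dstarMarshall, if_pos hxy]
  split_ifs with h
  · rw [max_eq_left (div_le_of_le_mul₀ (hx.trans hxy) (hx.trans hxy) (by nlinarith))]
  · have hy : 0 < y := by nlinarith
    rw [max_eq_right (by rw [le_div_iff₀ hy]; nlinarith)]
    field_simp

theorem dstarMarshall_le {x y : ℝ} (hx : x ∈ Icc (0 : ℝ) 1) (hy : y ∈ Icc (0 : ℝ) 1) :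
    dstarMarshall x y ≤ 4 / 27 := by
  wlog hxy : x ≤ y generalizing x y
  · rw [dstarMarshall_symm]; exact this hy hx (le_of_not_ge hxy)
  rw [dstarMarshall_eq hx.1 hxy]
  set s := max y (x / y)
  have hs0 : 0 ≤ s := le_max_of_le_left (hx.1.trans hxy)
  have hs1 : s ≤ 1 := max_le hy.2 (div_le_one_of_le₀ hxy (hx.1.trans hxy))
  have hxs : x ≤ s ^ 2 := by
    rcases (hx.1.trans hxy).eq_or_lt with hy0 | hy0
    · nlinarith
    · calc x = y * (x / y) := by field_simp
        _ ≤ s ^ 2 := by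
          rw [sq]
          exact mul_le_mul (le_max_left _ _) (le_max_right _ _) (div_nonneg hx.1 hy0.le) hs0
  nlinarith [mul_le_mul_of_nonneg_right hxs (sub_nonneg.2 hs1),
    mul_nonneg (sq_nonneg (s - 2 / 3)) (by linarith : (0:ℝ) ≤ s + 1 / 3)]

theorem min_sub_mul_min_le {x y a b : ℝ} (hx : 0 ≤ x) (hxy : x ≤ y) (hb : b ≤ 1) :
    min (y * a) (x * b) - x * min a b ≤ x * (1 - x / y) := by
  rcases (hx.trans hxy).eq_or_lt with rfl | hy
  · obtain rfl : x = 0 := le_antisymm hxy hx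
    simp
  have hxy' : x / y * y = x := div_mul_cancel₀ x hy.ne'
  rcases le_total b a with hba | hab
  · have : 0 ≤ x * (1 - x / y) := mul_nonneg hx (sub_nonneg.2 (div_le_one_of_le₀ hxy hy.le))
    rw [min_eq_right hba]
    linarith [min_le_right (y * a) (x * b)]
  rw [min_eq_left hab]
  rcases le_total a (x / y) with ha | ha
  · nlinarith [min_le_left (y * a) (x * b), mul_le_mul_of_nonneg_right ha (sub_nonneg.2 hxy)]
  · nlinarith [min_le_right (y * a) (x * b), mul_le_mul_of_nonneg_left ha hx,
      mul_le_mul_of_nonneg_left hb hx]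

theorem marshallCopula_sub_le_dstarMarshall {f g : ℝ → ℝ} (hf : IsMarshallGenerator f)
    (hg : IsMarshallGenerator g) {x y : ℝ} (hx : 0 ≤ x) (hxy : x ≤ y) (hy : y ≤ 1) :
    marshallCopula f g x y - marshallCopula f g y x ≤ dstarMarshall x y := by
  have hxI : x ∈ Icc (0 : ℝ) 1 := ⟨hx, hxy.trans hy⟩
  have hyI : y ∈ Icc (0 : ℝ) 1 := ⟨hx.trans hxy, hy⟩
  have hgy : g y ≤ 1 := (hg.mapsTo hyI).2
  have hxy_le : marshallCopula f g x y ≤ x :=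
    (min_le_right _ _).trans (mul_le_of_le_one_right hx hgy)
  have hyx_ge : x * y ≤ marshallCopula f g y x :=
    le_min (mul_le_mul_of_nonneg_left (hf.le_apply hyI) hx)
      (mul_comm x y ▸ mul_le_mul_of_nonneg_left (hg.le_apply hxI) hyI.1)
  have hyx_ge' : x * min (f x) (g y) ≤ marshallCopula f g y x := by
    rw [mul_min_of_nonneg _ _ hx]
    exact min_le_min (mul_le_mul_of_nonneg_left (hf.monotoneOn hxI hyI hxy) hx)
      (hg.mul_apply_le_mul_apply hx hxy hy)
  have := min_sub_mul_min_le (a := f x) hx hxy hgy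
  rw [dstarMarshall_eq hx hxy]
  rcases le_total y (x / y) with h | h
  · rw [max_eq_right h]
    exact (sub_le_sub_left hyx_ge' _).trans this
  · rw [max_eq_left h]
    linarith [mul_sub x 1 y]

theorem abs_marshallCopula_sub_le_dstarMarshall {f g : ℝ → ℝ} (hf : IsMarshallGenerator f)
    (hg : IsMarshallGenerator g) {x y : ℝ} (hx : x ∈ Icc (0 : ℝ) 1) (hy : y ∈ Icc (0 : ℝ) 1) :
    |marshallCopula f g x y - marshallCopula f g y x| ≤ dstarMarshall x y := by
  wlog hxy : x ≤ y generalizing x y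
  · rw [abs_sub_comm, dstarMarshall_symm]; exact this hy hx (le_of_not_ge hxy)
  refine abs_sub_le_iff.2 ⟨marshallCopula_sub_le_dstarMarshall hf hg hx.1 hxy hy.2, ?_⟩
  rw [← marshallCopula_swap f g x y, ← marshallCopula_swap f g y x]
  exact marshallCopula_sub_le_dstarMarshall hg hf hx.1 hxy hy.2

theorem IsMarshallCopula.abs_sub_le_dstarMarshall {C : ℝ → ℝ → ℝ} (hC : IsMarshallCopula C)
    {x y : ℝ} (hx : x ∈ Icc (0 : ℝ) 1) (hy : y ∈ Icc (0 : ℝ) 1) :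
    |C x y - C y x| ≤ dstarMarshall x y := by
  obtain ⟨f, g, hf, hg, hC⟩ := isMarshallCopula_iff.1 hC
  rw [hC x hx y hy, hC y hy x hx]
  exact abs_marshallCopula_sub_le_dstarMarshall hf hg hx hy

noncomputable def plateauGenerator (y c t : ℝ) : ℝ := min (max t c) (t / y)

theorem isMarshallGenerator_plateauGenerator {y c : ℝ} (hy0 : 0 < y) (hy1 : y ≤ 1)
    (hc0 : 0 ≤ c) (hc1 : c ≤ 1) : IsMarshallGenerator (plateauGenerator y c) where
  mapsTo t ht := ⟨le_min (ht.1.trans (le_max_left _ _)) (div_nonneg ht.1 hy0.le),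
    (min_le_left _ _).trans (max_le ht.2 hc1)⟩
  monotoneOn := ((monotone_id.max monotone_const).min
    (monotone_id.div_const hy0.le)).monotoneOn _
  map_zero := by simp [plateauGenerator, hc0]
  map_one := by
    simp [plateauGenerator, hc1, one_le_inv_iff₀, hy0, hy1]
  antitoneOn_div := by
    intro a ha b hb hab
    have key : ∀ t, 0 < t → plateauGenerator y c t / t = min (max 1 (c / t)) y⁻¹ := by
      intro t ht
      rw [plateauGenerator, ← min_div_div_right ht.le, ← max_div_div_right ht.le, div_self ht.ne',
        div_div_cancel_left' ht.ne']
    simp only [key a ha.1, key b hb.1]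
    gcongr
    exact ha.1

theorem marshallCopula_plateauGenerator_sub {x y : ℝ} (hx : 0 ≤ x) (hxy : x ≤ y) (hy0 : 0 < y)
    (hy1 : y ≤ 1) :
    marshallCopula (plateauGenerator y (max y (x / y))) (plateauGenerator y 1) x y -
      marshallCopula (plateauGenerator y (max y (x / y))) (plateauGenerator y 1) y x =
      dstarMarshall x y := by
  set c := max y (x / y)
  have hxy_c : x / y ≤ c := le_max_right _ _
  have hx_c : x ≤ c := (le_div_self hx hy0 hy1).trans hxy_c
  have hc1 : c ≤ 1 := max_le hy1 (div_le_one_of_le₀ hxy hy0.le)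
  have hyy : y / y = 1 := div_self hy0.ne'
  have hyxy : y * (x / y) = x := mul_div_cancel₀ x hy0.ne'
  have hfx : plateauGenerator y c x = x / y := by
    rw [plateauGenerator, max_eq_right hx_c, min_eq_right hxy_c]
  have hfy : plateauGenerator y c y = c := by
    rw [plateauGenerator, max_eq_right (le_max_left _ _), hyy, min_eq_left hc1]
  have hgx : plateauGenerator y 1 x = x / y := by
    rw [plateauGenerator, max_eq_right (hxy.trans hy1), min_eq_right (div_le_one_of_le₀ hxy hy0.le)]
  have hgy : plateauGenerator y 1 y = 1 := by
    rw [plateauGenerator, max_eq_right hy1, hyy, min_self]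
  rw [marshallCopula, marshallCopula, hfx, hfy, hgx, hgy, hyxy, mul_one, min_self,
    min_eq_left (mul_le_of_le_one_right hx hc1), dstarMarshall_eq hx hxy]
  ring

theorem exists_isMarshallCopula_abs_sub_eq_dstarMarshall {x y : ℝ} (hx : x ∈ Icc (0 : ℝ) 1)
    (hy : y ∈ Icc (0 : ℝ) 1) :
    ∃ C, IsMarshallCopula C ∧ |C x y - C y x| = dstarMarshall x y := by
  wlog hxy : x ≤ y generalizing x y
  · obtain ⟨C, hC, h⟩ := this hy hx (le_of_not_ge hxy)
    exact ⟨C, hC, by rw [abs_sub_comm, h, dstarMarshall_symm]⟩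
  rcases (hx.1.trans hxy).eq_or_lt with rfl | hy0
  · obtain rfl : x = 0 := le_antisymm hxy hx.1
    have hid := isMarshallGenerator_plateauGenerator zero_lt_one le_rfl zero_le_one le_rfl
    exact ⟨_, isMarshallCopula_iff.2 ⟨_, _, hid, hid, fun _ _ _ _ => rfl⟩, by simp [dstarMarshall]⟩
  have hc1 : max y (x / y) ≤ 1 := max_le hy.2 (div_le_one_of_le₀ hxy hy0.le)
  refine ⟨_, isMarshallCopula_iff.2 ⟨_, _,
    isMarshallGenerator_plateauGenerator hy0 hy.2 (hy0.le.trans (le_max_left _ _)) hc1,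
    isMarshallGenerator_plateauGenerator hy0 hy.2 zero_le_one le_rfl, fun _ _ _ _ => rfl⟩, ?_⟩
  rw [marshallCopula_plateauGenerator_sub hx.1 hxy hy0 hy.2, abs_eq_self, dstarMarshall_eq hx.1 hxy]
  exact mul_nonneg hx.1 (sub_nonneg.2 hc1)

/-- Theorem 4.4: every Marshall copula satisfies
`|C(x,y) − C(y,x)| ≤ 4/27`, the bound is sharp, and the maximal asymmetry function
of the family of Marshall copulas equals `d*`. -/
theorem marshall_maximal_asymmetry :
    (∀ C : ℝ → ℝ → ℝ, IsMarshallCopula C →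
      ∀ x ∈ Set.Icc (0:ℝ) 1, ∀ y ∈ Set.Icc (0:ℝ) 1, |C x y - C y x| ≤ 4 / 27) ∧
    (∃ C : ℝ → ℝ → ℝ, IsMarshallCopula C ∧
      ∃ x ∈ Set.Icc (0:ℝ) 1, ∃ y ∈ Set.Icc (0:ℝ) 1, |C x y - C y x| = 4 / 27) ∧
    (∀ x ∈ Set.Icc (0:ℝ) 1, ∀ y ∈ Set.Icc (0:ℝ) 1,
      IsLUB {d : ℝ | ∃ C : ℝ → ℝ → ℝ, IsMarshallCopula C ∧ d = |C x y - C y x|}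
        (dstarMarshall x y)) := by
  refine ⟨fun C hC x hx y hy => (hC.abs_sub_le_dstarMarshall hx hy).trans (dstarMarshall_le hx hy),
    ?_, fun x hx y hy => ⟨?_, ?_⟩⟩
  · have hx : (4 / 9 : ℝ) ∈ Icc (0 : ℝ) 1 := by norm_num
    have hy : (2 / 3 : ℝ) ∈ Icc (0 : ℝ) 1 := by norm_num
    obtain ⟨C, hC, h⟩ := exists_isMarshallCopula_abs_sub_eq_dstarMarshall hx hy
    exact ⟨C, hC, 4 / 9, hx, 2 / 3, hy, by rw [h]; norm_num [dstarMarshall]⟩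
  · rintro _ ⟨C, hC, rfl⟩
    exact hC.abs_sub_le_dstarMarshall hx hy
  · intro b hb
    obtain ⟨C, hC, h⟩ := exists_isMarshallCopula_abs_sub_eq_dstarMarshall hx hy
    exact h ▸ hb ⟨C, hC, rfl⟩
end

section
/- Let f,g ∈ 𝓕 and let x,z ∈ [0,1] with x + z ≤ 1. Then |min{xz, f(x)g(z)} − min{(1−x)(1−z), f(1−z)g(1−x)}| ≤ G(x,z), where G(x,z) = x(1−x−z)/(1−z) if 1−√x ≤ z ≤ min{x, 1−x}; G(x,z) = z(1−x−z)/(1−x) if 1−√z ≤ x ≤ min{z, 1−z}; and G(x,z) = xz otherwise. -/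
/-- The class `𝓕` of generators: `f : [0,1] → [0,1]`, `f(0) = f(1) = 0`,
`x ↦ f(x) + x` nondecreasing on `[0,1]`, and `x ↦ f(x)/x` nonincreasing on `(0,1]`. -/
def MemF (f : ℝ → ℝ) : Prop :=
  (∀ x ∈ Set.Icc (0:ℝ) 1, f x ∈ Set.Icc (0:ℝ) 1) ∧
  f 0 = 0 ∧ f 1 = 0 ∧
  MonotoneOn (fun x => f x + x) (Set.Icc 0 1) ∧
  AntitoneOn (fun x => f x / x) (Set.Ioc 0 1)

/-- The bound function `G` for maxmin copulas. -/
noncomputable def Gbound (x z : ℝ) : ℝ :=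
  if 1 - Real.sqrt x ≤ z ∧ z ≤ min x (1 - x) then x * (1 - x - z) / (1 - z)
  else if 1 - Real.sqrt z ≤ x ∧ x ≤ min z (1 - z) then z * (1 - x - z) / (1 - x)
  else x * z

lemma Gbound_nonneg {x z : ℝ} (hx0 : 0 ≤ x) (hz0 : 0 ≤ z) (hxz : x + z ≤ 1) :
    0 ≤ Gbound x z := by
  unfold Gbound
  split_ifs with h1 h2
  · have hz1 : z ≤ 1 - x := le_trans h1.2 (min_le_right _ _)
    apply div_nonneg (mul_nonneg hx0 (by linarith)) (by linarith)
  · have hx1 : x ≤ 1 - z := le_trans h2.2 (min_le_right _ _)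
    apply div_nonneg (mul_nonneg hz0 (by linarith)) (by linarith)
  · exact mul_nonneg hx0 hz0

/-- Core arithmetic lemma for the first branch of `Gbound`. -/
lemma branch1 (x z a b F G : ℝ)
    (hx0 : 0 ≤ x) (hz0 : 0 ≤ z) (hs : x + z < 1)
    (hzx : z ≤ x) (hvx : (1 - z)^2 ≤ x)
    (ha0 : 0 ≤ a) (hb0 : 0 ≤ b) (hF0 : 0 ≤ F) (hG0 : 0 ≤ G)
    (ha : a ≤ 1 - x) (hb : b ≤ 1 - z) (hF : F ≤ z) (hG : G ≤ x)
    (hFa : a - (1 - x - z) ≤ F) (hGb : b - (1 - x - z) ≤ G)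
    (hFx : F * x ≤ a * (1 - z)) (hGz : G * z ≤ b * (1 - x)) :
    |min (x * z) (a * b) - min ((1 - x) * (1 - z)) (F * G)| ≤ x * (1 - x - z) / (1 - z) := by
  have hv : 0 < 1 - z := by nlinarith [sq_nonneg (1 - z)]
  have hxpos : 0 < x := lt_of_lt_of_le (pow_pos hv 2) hvx
  have hu0 : 0 ≤ 1 - x := by linarith
  have hs0 : 0 < 1 - x - z := by linarith
  have hW0 : 0 ≤ x * (1 - x - z) / (1 - z) := by positivity
  rcases hz0.eq_or_lt with hz | hzpos
  · -- z = 0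
    subst hz
    have hFz : F = 0 := le_antisymm (by linarith) hF0
    have h1 : min (x * 0) (a * b) = 0 := by
      rw [mul_zero]; exact min_eq_left (mul_nonneg ha0 hb0)
    have h2 : min ((1 - x) * (1 - 0)) (F * G) = 0 := by
      rw [hFz, zero_mul]; exact min_eq_right (by nlinarith [hu0])
    rw [h1, h2]; simpa using hW0
  · have hA1 := min_le_left (x * z) (a * b)
    have hA2 := min_le_right (x * z) (a * b)
    have hA0 : 0 ≤ min (x * z) (a * b) := le_min (by positivity) (by positivity)
    have hB1 := min_le_left ((1 - x) * (1 - z)) (F * G)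
    have hB2 := min_le_right ((1 - x) * (1 - z)) (F * G)
    have hB0 : 0 ≤ min ((1 - x) * (1 - z)) (F * G) :=
      le_min (by positivity) (mul_nonneg hF0 hG0)
    have hFGzx : F * G ≤ z * x := mul_le_mul hF hG hG0 hz0
    have hupos : 0 < 1 - x := by linarith
    rw [abs_le]
    constructor
    · -- need: -(W) ≤ A - B, i.e. B - A ≤ W
      have hI : min ((1 - x) * (1 - z)) (F * G) - min (x * z) (a * b) ≤
          x * (1 - x - z) / (1 - z) := by
        rcases le_total (x * z) (a * b) with hab | hab
        · rw [min_eq_left hab]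
          linarith [hB2, hFGzx, hW0, mul_comm z x]
        · rw [min_eq_right hab]
          have key : F * G - a * b ≤ x * (1 - x - z) / (1 - z) := by
            rw [le_div_iff₀ hv]
            have hT : (F * x) * (G * z) ≤ (a * (1 - z)) * (b * (1 - x)) :=
              mul_le_mul hFx hGz (mul_nonneg hG0 hz0) (mul_nonneg ha0 hv.le)
            have e1 : (F * G - a * b) * (x * z) ≤ a * b * (1 - x - z) := by linarith [hT]
            rcases le_total (a * b * ((1 - x) * (1 - z))) (x * z * (x * z)) with hc | hc
            · have t1 := mul_le_mul_of_nonneg_right e1 (mul_nonneg hu0 hv.le)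
              have t2 := mul_le_mul_of_nonneg_left hc hs0.le
              have hzu : z ≤ 1 - x := by linarith
              have t3 := mul_le_mul_of_nonneg_left hzu
                (by positivity : (0:ℝ) ≤ (1 - x - z) * (x * x * z))
              have big : (F * G - a * b) * (1 - z) * (x * z * (1 - x)) ≤
                  x * (1 - x - z) * (x * z * (1 - x)) := by linarith [t1, t2, t3]
              exact le_of_mul_le_mul_right big (by positivity)
            · have step : (x * z - a * b) * ((1 - x) * (1 - z)) ≤ x * z * (1 - x - z) := by
                linarith [hc]
              have w1 : F * G - a * b ≤ x * z - a * b := by linarith [hFGzx, mul_comm z x]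
              have w2 := mul_le_mul_of_nonneg_right w1 (mul_nonneg hv.le hu0)
              have hzu : z ≤ 1 - x := by linarith
              have w3 := mul_le_mul_of_nonneg_left hzu
                (by positivity : (0:ℝ) ≤ x * (1 - x - z))
              have big : (F * G - a * b) * (1 - z) * (1 - x) ≤
                  x * (1 - x - z) * (1 - x) := by linarith [w2, step, w3]
              exact le_of_mul_le_mul_right big hupos
          linarith [hB2]
      linarith [hI]
    · -- A - B ≤ W
      rcases le_total ((1 - x) * (1 - z)) (F * G) with hBc | hBc
      · rw [min_eq_left hBc]
        have huv : (1 - x) * (1 - z) = 1 - x - z + x * z := by ring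
        linarith [hA1, hW0]
      · rw [min_eq_right hBc, le_div_iff₀ hv]
        rcases le_total a (1 - x - z) with has | has
        · have c1 : a * b ≤ (1 - x - z) * (1 - z) := mul_le_mul has hb hb0 hs0.le
          have t1 := mul_le_mul_of_nonneg_right (hA2.trans c1) hv.le
          have t2 := mul_le_mul_of_nonneg_left hvx hs0.le
          have t3 : 0 ≤ F * G * (1 - z) := by positivity
          linarith [t1, t2, t3]
        · rcases le_total b (1 - x - z) with hbs | hbs
          · have c1 : a * b ≤ (1 - x) * (1 - x - z) := mul_le_mul ha hbs hb0 hu0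
            have huvx : (1 - x) * (1 - z) ≤ x := by
              linarith [mul_nonneg (sub_nonneg.2 hzx) hv.le, hvx]
            have t1 := mul_le_mul_of_nonneg_right (hA2.trans c1) hv.le
            have t2 := mul_le_mul_of_nonneg_left huvx hs0.le
            have t3 : 0 ≤ F * G * (1 - z) := by positivity
            linarith [t1, t2, t3]
          · have has' : 0 ≤ a - (1 - x - z) := by linarith
            have hbs' : 0 ≤ b - (1 - x - z) := by linarith
            have hq : (a - (1 - x - z)) * (b - (1 - x - z)) ≤ F * G :=
              mul_le_mul hFa hGb hbs' hF0
            have hapos : 0 < a := lt_of_lt_of_le hs0 has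
            rcases le_total (a * (1 - z)) (x * z) with hav | hav
            · have t1 := mul_le_mul_of_nonneg_right hA2 hv.le
              have t2 := mul_le_mul_of_nonneg_right hq hv.le
              have t3 := mul_le_mul_of_nonneg_left hav hs0.le
              have t4 := mul_le_mul_of_nonneg_left
                (mul_le_mul_of_nonneg_right hb hv.le) hs0.le
              linarith [t1, t2, t3, t4]
            · have hP : (a * (1 - z) - x * z) * (a - (1 - z)) ≤ 0 :=
                mul_nonpos_of_nonneg_of_nonpos (by linarith) (by linarith)
              rcases le_total (a * b) (x * z) with hab2 | hab2
              · have t1 := mul_le_mul_of_nonneg_right hA2 hv.le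
                have t2 := mul_le_mul_of_nonneg_right hq hv.le
                have k1 : ((a + b - (1 - x - z)) * (1 - z)) * a ≤ x * a := by
                  linarith [hP, mul_le_mul_of_nonneg_left hab2 hv.le]
                have k2 : (a + b - (1 - x - z)) * (1 - z) ≤ x :=
                  le_of_mul_le_mul_right k1 hapos
                have k3 := mul_le_mul_of_nonneg_left k2 hs0.le
                linarith [t1, t2, k3]
              · have t1 := mul_le_mul_of_nonneg_right hA1 hv.le
                have t2 := mul_le_mul_of_nonneg_right hq hv.le
                rcases le_total (x * z) ((1 - x - z) * a) with hxs | hxs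
                · have huvx : (1 - x) * (1 - z) ≤ x := by
                    linarith [mul_nonneg (sub_nonneg.2 hzx) hv.le, hvx]
                  have p1 := mul_le_mul_of_nonneg_right hxs hv.le
                  have p2 := mul_le_mul_of_nonneg_right
                    (mul_le_mul_of_nonneg_left ha hs0.le) hv.le
                  have p3 := mul_le_mul_of_nonneg_left huvx hs0.le
                  have q0 : 0 ≤ ((a - (1 - x - z)) * (b - (1 - x - z))) * (1 - z) :=
                    mul_nonneg (mul_nonneg has' hbs') hv.le
                  linarith [t1, t2, q0, p1, p2, p3]
                · have hqa : (a - (1 - x - z)) * (x * z - (1 - x - z) * a) ≤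
                      ((a - (1 - x - z)) * (b - (1 - x - z))) * a := by
                    linarith [mul_le_mul_of_nonneg_left hab2 has']
                  have hPs : (1 - x - z) * ((a * (1 - z) - x * z) * (a - (1 - z))) ≤ 0 := by
                    have h := mul_le_mul_of_nonneg_left hP hs0.le
                    simpa using h
                  have k1 : (x * z - (a - (1 - x - z)) * (b - (1 - x - z))) * (1 - z) * a ≤
                      x * (1 - x - z) * a := by
                    linarith [mul_le_mul_of_nonneg_right hqa hv.le, hPs]
                  have k2 : (x * z - (a - (1 - x - z)) * (b - (1 - x - z))) * (1 - z) ≤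
                      x * (1 - x - z) :=
                    le_of_mul_le_mul_right k1 hapos
                  linarith [t1, t2, k2]

/-- Lemma 5.4: for `f, g ∈ 𝓕` and `x, z ∈ [0,1]` with `x + z ≤ 1`,
`|min{xz, f(x)g(z)} − min{(1−x)(1−z), f(1−z)g(1−x)}| ≤ G(x,z)`. -/
theorem maxmin_asymmetry_pointwise_bound (f g : ℝ → ℝ) (hf : MemF f) (hg : MemF g) :
    ∀ x ∈ Set.Icc (0:ℝ) 1, ∀ z ∈ Set.Icc (0:ℝ) 1, x + z ≤ 1 →
      |min (x * z) (f x * g z) - min ((1 - x) * (1 - z)) (f (1 - z) * g (1 - x))| ≤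
        Gbound x z := by
  intro x hx z hz hxz
  obtain ⟨hx0, hx1⟩ := hx
  obtain ⟨hz0, hz1⟩ := hz
  obtain ⟨hfr, hf0, hf1, hfm, hfa⟩ := hf
  obtain ⟨hgr, hg0, hg1, hgm, hga⟩ := hg
  have hmemx : x ∈ Set.Icc (0:ℝ) 1 := ⟨hx0, hx1⟩
  have hmemz : z ∈ Set.Icc (0:ℝ) 1 := ⟨hz0, hz1⟩
  have hmem1z : (1:ℝ) - z ∈ Set.Icc (0:ℝ) 1 := ⟨by linarith, by linarith⟩
  have hmem1x : (1:ℝ) - x ∈ Set.Icc (0:ℝ) 1 := ⟨by linarith, by linarith⟩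
  have hmem1 : (1:ℝ) ∈ Set.Icc (0:ℝ) 1 := ⟨by norm_num, le_refl 1⟩
  have ha0 : 0 ≤ f x := (hfr x hmemx).1
  have hb0 : 0 ≤ g z := (hgr z hmemz).1
  have hF0 : 0 ≤ f (1 - z) := (hfr _ hmem1z).1
  have hG0 : 0 ≤ g (1 - x) := (hgr _ hmem1x).1
  have ha : f x ≤ 1 - x := by
    have h : f x + x ≤ f 1 + 1 := hfm hmemx hmem1 hx1
    rw [hf1] at h; linarith
  have hb : g z ≤ 1 - z := by
    have h : g z + z ≤ g 1 + 1 := hgm hmemz hmem1 hz1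
    rw [hg1] at h; linarith
  have hF : f (1 - z) ≤ z := by
    have h : f (1 - z) + (1 - z) ≤ f 1 + 1 := hfm hmem1z hmem1 (by linarith)
    rw [hf1] at h; linarith
  have hG : g (1 - x) ≤ x := by
    have h : g (1 - x) + (1 - x) ≤ g 1 + 1 := hgm hmem1x hmem1 (by linarith)
    rw [hg1] at h; linarith
  have hFa : f x - (1 - x - z) ≤ f (1 - z) := by
    have h : f x + x ≤ f (1 - z) + (1 - z) := hfm hmemx hmem1z (by linarith)
    linarith
  have hGb : g z - (1 - x - z) ≤ g (1 - x) := by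
    have h : g z + z ≤ g (1 - x) + (1 - x) := hgm hmemz hmem1x (by linarith)
    linarith
  have hFx : f (1 - z) * x ≤ f x * (1 - z) := by
    rcases hx0.eq_or_lt with h0 | hxpos
    · rw [← h0]; simp [hf0]
    · have h1zpos : 0 < 1 - z := lt_of_lt_of_le hxpos (by linarith)
      have h : f (1 - z) / (1 - z) ≤ f x / x :=
        hfa ⟨hxpos, hx1⟩ ⟨h1zpos, by linarith⟩ (by linarith)
      rw [div_le_div_iff₀ h1zpos hxpos] at h
      exact h
  have hGz : g (1 - x) * z ≤ g z * (1 - x) := by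
    rcases hz0.eq_or_lt with h0 | hzpos
    · rw [← h0]; simp [hg0]
    · have h1xpos : 0 < 1 - x := lt_of_lt_of_le hzpos (by linarith)
      have h : g (1 - x) / (1 - x) ≤ g z / z :=
        hga ⟨hzpos, hz1⟩ ⟨h1xpos, by linarith⟩ (by linarith)
      rw [div_le_div_iff₀ h1xpos hzpos] at h
      exact h
  rcases eq_or_lt_of_le hxz with heq | hlt
  · have h1 : 1 - z = x := by linarith
    have h2 : 1 - x = z := by linarith
    rw [h1, h2, mul_comm z x]
    rw [sub_self, abs_zero]
    exact Gbound_nonneg hx0 hz0 hxz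
  · unfold Gbound
    split_ifs with h1 h2
    · obtain ⟨h1a, h1b⟩ := h1
      rw [le_min_iff] at h1b
      obtain ⟨hzx, hzu⟩ := h1b
      have hvx : (1 - z)^2 ≤ x := by
        have h0 : 1 - z ≤ Real.sqrt x := by linarith
        nlinarith [Real.sq_sqrt hx0, Real.sqrt_nonneg x, h0]
      exact branch1 x z (f x) (g z) (f (1 - z)) (g (1 - x)) hx0 hz0 hlt hzx hvx
        ha0 hb0 hF0 hG0 ha hb hF hG hFa hGb hFx hGz
    · obtain ⟨h2a, h2b⟩ := h2
      rw [le_min_iff] at h2b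
      obtain ⟨hxz', hxv⟩ := h2b
      have hvz : (1 - x)^2 ≤ z := by
        have h0 : 1 - x ≤ Real.sqrt z := by linarith
        nlinarith [Real.sq_sqrt hz0, Real.sqrt_nonneg z, h0]
      have key := branch1 z x (g z) (f x) (g (1 - x)) (f (1 - z)) hz0 hx0
        (by linarith) hxz' hvz hb0 ha0 hG0 hF0 hb ha hG hF
        (by linarith [hGb]) (by linarith [hFa]) hGz hFx
      have e1 : min (z * x) (g z * f x) = min (x * z) (f x * g z) := by
        rw [mul_comm z x, mul_comm (g z) (f x)]
      have e2 : min ((1 - z) * (1 - x)) (g (1 - x) * f (1 - z)) =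
          min ((1 - x) * (1 - z)) (f (1 - z) * g (1 - x)) := by
        rw [mul_comm (1 - z) (1 - x), mul_comm (g (1 - x)) (f (1 - z))]
      have e3 : z * (1 - z - x) / (1 - x) = z * (1 - x - z) / (1 - x) := by ring_nf
      rw [e1, e2, e3] at key
      rw [abs_sub_comm] at key
      rw [abs_sub_comm]
      exact key
    · have hu0 : (0:ℝ) ≤ 1 - x := by linarith
      have hv0 : (0:ℝ) ≤ 1 - z := by linarith
      have hFG : f (1 - z) * g (1 - x) ≤ z * x := mul_le_mul hF hG hG0 hz0
      have hcc : z * x = x * z := mul_comm z x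
      have hA1 := min_le_left (x * z) (f x * g z)
      have hA0 : 0 ≤ min (x * z) (f x * g z) :=
        le_min (mul_nonneg hx0 hz0) (mul_nonneg ha0 hb0)
      have hB0 : 0 ≤ min ((1 - x) * (1 - z)) (f (1 - z) * g (1 - x)) :=
        le_min (mul_nonneg hu0 hv0) (mul_nonneg hF0 hG0)
      have hB2 := min_le_right ((1 - x) * (1 - z)) (f (1 - z) * g (1 - x))
      rw [abs_le]
      constructor
      · linarith
      · linarith
end

section
/- Let f,g ∈ 𝓕 and let x,y ∈ [0,1] with x ≤ y and f(x)g(y) ≤ f(y)g(x). Then |max{0, xy − f(x)g(y)} − max{0, xy − f(y)g(x)}| ≤ H(x,y), where H(x,y) = x(y−x)/y if y(1−y) ≤ x ≤ 1−y; H(x,y) = (y−x)(1−y)/y if x ≥ 1−y; and H(x,y) = xy if x ≤ y(1−y). -/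
/-- The bound function `H` for reflected maxmin copulas (on `0 ≤ x ≤ y ≤ 1`). -/
noncomputable def Hbound (x y : ℝ) : ℝ :=
  if y * (1 - y) ≤ x ∧ x ≤ 1 - y then x * (y - x) / y
  else if 1 - y ≤ x then (y - x) * (1 - y) / y
  else x * y

set_option maxHeartbeats 1000000 in
/-- Lemma 6.1: for `f, g ∈ 𝓕`, `0 ≤ x ≤ y ≤ 1` and
`f(x)g(y) ≤ f(y)g(x)`, one has
`|max{0, xy − f(x)g(y)} − max{0, xy − f(y)g(x)}| ≤ H(x,y)`. -/
theorem rmm_asymmetry_pointwise_bound (f g : ℝ → ℝ) (hf : MemF f) (hg : MemF g) :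
    ∀ x ∈ Set.Icc (0:ℝ) 1, ∀ y ∈ Set.Icc (0:ℝ) 1, x ≤ y →
      f x * g y ≤ f y * g x →
      |max 0 (x * y - f x * g y) - max 0 (x * y - f y * g x)| ≤ Hbound x y := by
  obtain ⟨hfB, hf0, hf1, hfM, hfA⟩ := hf
  obtain ⟨hgB, hg0, hg1, hgM, hgA⟩ := hg
  rintro x ⟨hx0, hx1⟩ y ⟨hy0, hy1⟩ hxy hab
  rcases eq_or_lt_of_le hy0 with hy | hy
  · have hx : x = 0 := le_antisymm (hy ▸ hxy) hx0
    subst hx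
    have hy' : y = 0 := hy.symm
    subst hy'
    simp [Hbound, hf0, hg0]
  -- now 0 < y
  set a := f x * g y with ha
  set b := f y * g x with hb
  have hfx0 : 0 ≤ f x := (hfB x ⟨hx0, hx1⟩).1
  have hfy0 : 0 ≤ f y := (hfB y ⟨hy0, hy1⟩).1
  have hgx0 : 0 ≤ g x := (hgB x ⟨hx0, hx1⟩).1
  have hgy0 : 0 ≤ g y := (hgB y ⟨hy0, hy1⟩).1
  have hfy1 : f y ≤ 1 - y := by
    have h : f y + y ≤ f 1 + 1 := hfM ⟨hy0, hy1⟩ ⟨zero_le_one, le_rfl⟩ hy1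
    rw [hf1] at h; linarith
  have hgy1 : g y ≤ 1 - y := by
    have h : g y + y ≤ g 1 + 1 := hgM ⟨hy0, hy1⟩ ⟨zero_le_one, le_rfl⟩ hy1
    rw [hg1] at h; linarith
  have hgxle : g x ≤ g y + (y - x) := by
    have h : g x + x ≤ g y + y := hgM ⟨hx0, hx1⟩ ⟨hy0, hy1⟩ hxy
    linarith
  -- a * y ≥ x * (f y * g y)
  have hay : x * (f y * g y) ≤ a * y := by
    rcases eq_or_lt_of_le hx0 with hx | hx
    · subst hx
      simp [ha, hf0]
    · have h : f y / y ≤ f x / x := hfA ⟨hx, hx1⟩ ⟨hy, hy1⟩ hxy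
      have h2 : f y * x ≤ f x * y := by
        rw [div_le_div_iff₀ hy hx] at h; linarith
      have := mul_le_mul_of_nonneg_right h2 hgy0
      rw [ha]; nlinarith
  -- (b - a) * y ≤ f y * (g y + y) * (y - x)
  have hbay : (b - a) * y ≤ f y * (g y + y) * (y - x) := by
    have h1 : b * y ≤ f y * (g y + (y - x)) * y := by
      have := mul_le_mul_of_nonneg_left hgxle hfy0
      nlinarith
    nlinarith
  -- D facts
  have hmaxle : max 0 (x * y - b) ≤ max 0 (x * y - a) :=
    max_le_max le_rfl (by linarith)
  have hDnn : 0 ≤ max 0 (x * y - a) - max 0 (x * y - b) := by linarith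
  rw [abs_of_nonneg hDnn]
  set D := max 0 (x * y - a) - max 0 (x * y - b) with hD
  have hDba : D ≤ b - a := by
    have h1 : max 0 (x * y - a) ≤ max 0 (x * y - b) + (b - a) := by
      apply max_le
      · have := le_max_left 0 (x * y - b); linarith [hab]
      · have := le_max_right 0 (x * y - b); linarith
    rw [hD]; linarith
  have hDa : D ≤ max 0 (x * y - a) := by
    have := le_max_left 0 (x * y - b); rw [hD]; linarith
  rw [Hbound]
  split_ifs with h1 h2
  · -- middle case : y(1-y) ≤ x ≤ 1-y, target x(y-x)/y
    obtain ⟨hl, hr⟩ := h1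
    by_cases hw : f y * (g y + y) ≤ x
    · rw [le_div_iff₀ hy]
      have h3 : D * y ≤ (b - a) * y := mul_le_mul_of_nonneg_right hDba hy0
      nlinarith [mul_le_mul_of_nonneg_right hw (sub_nonneg.2 hxy)]
    · push_neg at hw
      have hrhs : 0 ≤ x * (y - x) / y :=
        div_nonneg (mul_nonneg hx0 (by linarith)) hy0
      rcases le_total (x * y - a) 0 with h | h
      · have : max 0 (x * y - a) = 0 := max_eq_left h
        rw [this] at hDa; linarith
      · rw [le_div_iff₀ hy]
        have hDu : D ≤ x * y - a := by
          rw [max_eq_right h] at hDa; exact hDa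
        have hD3 : D * y ≤ (x * y - a) * y :=
          mul_le_mul_of_nonneg_right hDu hy0
        -- f y * g y > x - f y * y ≥ x - (1-y) y
        have hfyy : f y * y ≤ (1 - y) * y := mul_le_mul_of_nonneg_right hfy1 hy0
        nlinarith [mul_le_mul_of_nonneg_left (le_of_lt hw) hx0]
  · -- right case : 1-y ≤ x, target (y-x)(1-y)/y
    rw [le_div_iff₀ hy]
    have h3 : D * y ≤ (b - a) * y := mul_le_mul_of_nonneg_right hDba hy0
    have hw : f y * (g y + y) ≤ (1 - y) * 1 :=
      mul_le_mul hfy1 (by linarith) (by linarith) (by linarith)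
    have h4 := mul_le_mul_of_nonneg_right hw (sub_nonneg.2 hxy)
    nlinarith
  · -- left case : x < y(1-y), target x*y
    have ha0 : 0 ≤ a := mul_nonneg hfx0 hgy0
    have : max 0 (x * y - a) ≤ x * y :=
      max_le (mul_nonneg hx0 hy0) (by linarith)
    linarith
end

section
/- Define H on {(x,y) : 0 ≤ x ≤ y ≤ 1} by H(x,y) = x(y−x)/y if y(1−y) ≤ x ≤ 1−y; H(x,y) = (y−x)(1−y)/y if x ≥ 1−y; and H(x,y) = xy if x ≤ y(1−y). Then H(x,y) ≤ 3 − 2√2 for all 0 ≤ x ≤ y ≤ 1, and H(1 − √2/2, √2/2) = 3 − 2√2. -/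
/-- Lemma 6.2: `H(x,y) ≤ 3 − 2√2` for all `0 ≤ x ≤ y ≤ 1`,
with equality at `(1 − √2/2, √2/2)`. -/
theorem Hbound_le_and_attained :
    (∀ x y : ℝ, 0 ≤ x → x ≤ y → y ≤ 1 → Hbound x y ≤ 3 - 2 * Real.sqrt 2) ∧
    Hbound (1 - Real.sqrt 2 / 2) (Real.sqrt 2 / 2) = 3 - 2 * Real.sqrt 2 := by
  have hs : Real.sqrt 2 ^ 2 = 2 := Real.sq_sqrt (by norm_num)
  have hs0 : (0:ℝ) < Real.sqrt 2 := Real.sqrt_pos.mpr (by norm_num)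
  set s := Real.sqrt 2 with hsdef
  have hs2 : s ≤ 3/2 := by nlinarith
  constructor
  · intro x y hx hxy hy1
    unfold Hbound
    split_ifs with h1 h2
    · -- x*(y-x)/y ≤ 3 - 2s
      rcases eq_or_lt_of_le (hx.trans hxy) with hy | hy
      · simp [← hy]; nlinarith
      · rw [div_le_iff₀ hy]
        rcases le_total y (2/3) with hy23 | hy23
        · nlinarith [sq_nonneg (2*x - y), sq_nonneg (12*s - 17)]
        · nlinarith [sq_nonneg (s*y - 1), mul_nonneg (sub_nonneg.mpr h1.2)
            (show (0:ℝ) ≤ 2*y - 1 - x by nlinarith)]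
    · -- (y-x)*(1-y)/y ≤ 3 - 2s
      have hy : (0:ℝ) < y := by nlinarith
      rw [div_le_iff₀ hy]
      nlinarith [sq_nonneg (s*y - 1), sq_nonneg y, mul_nonneg (sub_nonneg.mpr (show (1:ℝ)-y ≤ x from h2))
        (sub_nonneg.mpr hy1)]
    · -- x*y ≤ 3 - 2s
      push_neg at h2
      have hx' : x < y * (1 - y) := by
        rcases not_and_or.mp h1 with h | h
        · exact lt_of_not_ge h
        · exact absurd h2.le h
      have hy0 : (0:ℝ) ≤ y := hx.trans hxy
      nlinarith [mul_nonneg (sq_nonneg (3*y - 2)) (show (0:ℝ) ≤ 3*y + 1 by nlinarith),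
        sq_nonneg (54*s - 77), mul_le_mul_of_nonneg_right hx'.le hy0]
  · have hcond : (s/2) * (1 - s/2) ≤ 1 - s/2 ∧ 1 - s/2 ≤ 1 - s/2 := by
      constructor
      · nlinarith
      · exact le_refl _
    rw [Hbound, if_pos hcond]
    have : s ≠ 0 := ne_of_gt hs0
    field_simp
    nlinarith
end

section
/- For every reflected maxmin copula C and all x,y ∈ [0,1] one has |C(x,y) − C(y,x)| ≤ 3 − 2√2, and this bound is sharp over the class of reflected maxmin copulas. Moreover, for every (x,y) ∈ [0,1]² with x ≤ y, the supremum of the set {|C(x,y) − C(y,x)| : C a reflected maxmin copula} equals (x/y)(y−x) if y(1−y) ≤ x ≤ min{y, 1−y}; equals ((1−y)/y)(y−x) if 1−y ≤ x ≤ y; and equals xy if x ≤ y(1−y). For x ≥ y the supremum equals the value at (y,x). -/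
/-- A reflected maxmin (RMM) copula: `C(x,y) = max{0, xy − f(x)g(y)}` on `[0,1]²`
with `f, g ∈ 𝓕`. -/
def IsRMMCopula (C : ℝ → ℝ → ℝ) : Prop :=
  ∃ f g : ℝ → ℝ, MemF f ∧ MemF g ∧
    ∀ x ∈ Set.Icc (0:ℝ) 1, ∀ y ∈ Set.Icc (0:ℝ) 1,
      C x y = max 0 (x * y - f x * g y)

/-- The maximal asymmetry function of the family of RMM copulas (for `x ≤ y`). -/
noncomputable def dstarRMM (x y : ℝ) : ℝ :=
  if y * (1 - y) ≤ x ∧ x ≤ min y (1 - y) then x / y * (y - x)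
  else if 1 - y ≤ x then (1 - y) / y * (y - x)
  else x * y

/-! Write `A, B` for `f x, f y` and `P, Q` for `g x, g y`, where `x ≤ y`. Then
`C(x,y) - C(y,x) ≤ max 0 (min (x y) (B P) - A Q)`, and bounding `min (x y) (B P) - A Q` needs
only a few constraints that `𝓕` imposes on `(A, B)` and `(P, Q)`, chiefly `x B ≤ y A` and
`Q ≥ P - (y - x)`. Distinguishing `P ≤ y - x` from `P ≥ y - x` gives `dstarRMM x y`, which is
attained by tent-shaped generators with apexes `(y, 1 - y)` for `f` and `(x, h)` for `g`, where
`h = xy / (1 - y)` or `h = 1 - x`. Finally `y · dstarRMM x y ≤ m (y - m)` with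
`m = min x (1 - y)`, and over `m + y ≤ 1` this is at most `(3 - 2√2) y`, with equality at
`y = √2 / 2`, `m = 1 - √2 / 2`. -/

open Set

/-- The constraints on `a = f x`, `b = f y` for `f ∈ 𝓕` and `0 ≤ x ≤ y ≤ 1`. -/
structure GenValues (x y a b : ℝ) : Prop where
  left_nonneg : 0 ≤ a
  right_nonneg : 0 ≤ b
  left_le : a ≤ 1 - x
  right_le : b ≤ 1 - y
  mul_right_le : x * b ≤ y * a
  add_le : a + x ≤ b + y

theorem MemF.genValues {f : ℝ → ℝ} (hf : MemF f) {x y : ℝ} (hx : 0 ≤ x) (hxy : x ≤ y)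
    (hy : y ≤ 1) : GenValues x y (f x) (f y) := by
  obtain ⟨hrange, -, h1, hmono, hanti⟩ := hf
  have hxI : x ∈ Icc (0 : ℝ) 1 := ⟨hx, hxy.trans hy⟩
  have hyI : y ∈ Icc (0 : ℝ) 1 := ⟨hx.trans hxy, hy⟩
  have h1I : (1 : ℝ) ∈ Icc (0 : ℝ) 1 := ⟨zero_le_one, le_rfl⟩
  have hx1 := hmono hxI h1I hxI.2
  have hy1 := hmono hyI h1I hy
  simp only [h1] at hx1 hy1
  refine ⟨(hrange x hxI).1, (hrange y hyI).1, by linarith, by linarith, ?_, hmono hxI hyI hxy⟩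
  rcases hx.eq_or_lt with rfl | hx0
  · simpa using mul_nonneg hyI.1 (hrange 0 hxI).1
  · have := hanti ⟨hx0, hxI.2⟩ ⟨hx0.trans_le hxy, hy⟩ hxy
    rw [div_le_div_iff₀ (hx0.trans_le hxy) hx0] at this
    linarith

theorem dstarRMM_nonneg {x y : ℝ} (hx : 0 ≤ x) (hxy : x ≤ y) (hy : y ≤ 1) :
    0 ≤ dstarRMM x y := by
  unfold dstarRMM
  split_ifs
  · exact mul_nonneg (div_nonneg hx (hx.trans hxy)) (sub_nonneg.2 hxy)
  · exact mul_nonneg (div_nonneg (sub_nonneg.2 hy) (hx.trans hxy)) (sub_nonneg.2 hxy)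
  · exact mul_nonneg hx (hx.trans hxy)

namespace GenValues

variable {x y A B P Q : ℝ}

theorem mul_sub_mul_le_of_le_sub (hf : GenValues x y A B) (hg : GenValues x y P Q)
    (hP : P ≤ y - x) : B * P - A * Q ≤ (1 - y) * (y - x) := by
  have := mul_le_mul hf.right_le hP hg.left_nonneg (by linarith [hg.right_nonneg, hg.right_le])
  nlinarith [mul_nonneg hf.left_nonneg hg.right_nonneg]

theorem mul_mul_sub_mul_le (hf : GenValues x y A B) (hg : GenValues x y P Q) (hy : 0 ≤ y)
    (hP : y - x ≤ P) : y * (B * P - A * Q) ≤ B * (y - x) * (P + x) := by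
  have hQ : y * A * (P - (y - x)) ≤ y * A * Q :=
    mul_le_mul_of_nonneg_left (by linarith [hg.add_le]) (mul_nonneg hy hf.left_nonneg)
  have hA : x * B * (P - (y - x)) ≤ y * A * (P - (y - x)) :=
    mul_le_mul_of_nonneg_right hf.mul_right_le (by linarith)
  linarith

theorem mul_mul_sub_mul_le_one_sub (hf : GenValues x y A B) (hg : GenValues x y P Q)
    (hy : 0 ≤ y) (hxy : x ≤ y) : y * (B * P - A * Q) ≤ (1 - y) * (y - x) := by
  have h1y : 0 ≤ 1 - y := by linarith [hg.right_nonneg, hg.right_le]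
  have hE : 0 ≤ (1 - y) * (y - x) := mul_nonneg h1y (sub_nonneg.2 hxy)
  rcases le_total P (y - x) with hP | hP
  · have := hf.mul_sub_mul_le_of_le_sub hg hP
    nlinarith [mul_nonneg hy (sub_nonneg.2 this), mul_nonneg h1y hE]
  · have := hf.mul_mul_sub_mul_le hg hy hP
    have hPx : 0 ≤ P + x := by linarith
    nlinarith [mul_nonneg (sub_nonneg.2 hf.right_le) (mul_nonneg (sub_nonneg.2 hxy) hPx),
      mul_nonneg hE (by linarith [hg.left_le] : 0 ≤ 1 - (P + x))]

theorem mul_min_sub_le (hf : GenValues x y A B) (hg : GenValues x y P Q) (hx : 0 ≤ x)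
    (hxy : x ≤ y) (hP : y - x ≤ P) : y * (min (x * y) (B * P) - A * Q) ≤ x * (y - x) := by
  have hy : 0 ≤ y := hx.trans hxy
  rcases le_total (B * (P + x)) x with hB | hB
  · have := hf.mul_mul_sub_mul_le hg hy hP
    nlinarith [mul_le_mul_of_nonneg_left hB (sub_nonneg.2 hxy),
      mul_le_mul_of_nonneg_left (min_le_right (x * y) (B * P)) hy]
  · -- `B (P - (y - x)) ≥ x - (1 - y) y`, while `x B (P - (y - x)) ≤ y A Q`
    have hQ : y * A * (P - (y - x)) ≤ y * A * Q :=
      mul_le_mul_of_nonneg_left (by linarith [hg.add_le]) (mul_nonneg hy hf.left_nonneg)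
    have hA : x * B * (P - (y - x)) ≤ y * A * (P - (y - x)) :=
      mul_le_mul_of_nonneg_right hf.mul_right_le (by linarith)
    have hB' : y * y - y + x ≤ B * (P - (y - x)) := by
      nlinarith [mul_le_mul_of_nonneg_right hf.right_le hy]
    nlinarith [mul_le_mul_of_nonneg_left (min_le_left (x * y) (B * P)) hy,
      mul_le_mul_of_nonneg_left hB' hx]

theorem min_sub_le_dstarRMM (hf : GenValues x y A B) (hg : GenValues x y P Q) (hx : 0 ≤ x)
    (hxy : x ≤ y) : min (x * y) (B * P) - A * Q ≤ dstarRMM x y := by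
  have hAQ := mul_nonneg hf.left_nonneg hg.right_nonneg
  have hy1 : y ≤ 1 := by linarith [hg.right_nonneg, hg.right_le]
  rcases (hx.trans hxy).eq_or_lt with rfl | hy
  · linarith [min_le_left (x * 0) (B * P), dstarRMM_nonneg hx hxy hy1]
  unfold dstarRMM
  split_ifs with hR1 hR2
  · rw [div_mul_eq_mul_div, le_div_iff₀ hy]
    rcases le_total P (y - x) with hP | hP
    · have := hf.mul_sub_mul_le_of_le_sub hg hP
      nlinarith [min_le_right (x * y) (B * P), mul_le_mul_of_nonneg_right hR1.1 (sub_nonneg.2 hxy)]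
    · linarith [hf.mul_min_sub_le hg hx hxy hP]
  · rw [div_mul_eq_mul_div, le_div_iff₀ hy]
    nlinarith [hf.mul_mul_sub_mul_le_one_sub hg hy.le hxy, min_le_right (x * y) (B * P)]
  · linarith [min_le_left (x * y) (B * P)]

theorem max_sub_max_le_dstarRMM (hf : GenValues x y A B) (hg : GenValues x y P Q) (hx : 0 ≤ x)
    (hxy : x ≤ y) : max 0 (x * y - A * Q) - max 0 (x * y - B * P) ≤ dstarRMM x y := by
  have h := hf.min_sub_le_dstarRMM hg hx hxy
  have hd := dstarRMM_nonneg hx hxy (by linarith [hg.right_nonneg, hg.right_le])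
  rw [sub_le_iff_le_add]
  refine max_le (by linarith [le_max_left 0 (x * y - B * P)]) ?_
  rcases le_total (x * y) (B * P) with hm | hm
  · rw [min_eq_left hm] at h
    linarith [le_max_left 0 (x * y - B * P)]
  · rw [min_eq_right hm] at h
    linarith [le_max_right 0 (x * y - B * P)]

end GenValues

theorem IsRMMCopula.abs_sub_le_dstarRMM {C : ℝ → ℝ → ℝ} (hC : IsRMMCopula C) {x y : ℝ}
    (hx : 0 ≤ x) (hxy : x ≤ y) (hy : y ≤ 1) : |C x y - C y x| ≤ dstarRMM x y := by
  obtain ⟨f, g, hf, hg, hC⟩ := hC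
  have hf' := hf.genValues hx hxy hy
  have hg' := hg.genValues hx hxy hy
  rw [hC x ⟨hx, hxy.trans hy⟩ y ⟨hx.trans hxy, hy⟩, hC y ⟨hx.trans hxy, hy⟩ x ⟨hx, hxy.trans hy⟩,
    mul_comm y x, abs_sub_le_iff]
  refine ⟨hf'.max_sub_max_le_dstarRMM hg' hx hxy, ?_⟩
  simpa only [mul_comm (g _) (f _)] using hg'.max_sub_max_le_dstarRMM hf' hx hxy

/-- The tent with vertices `(0, 0)`, `(p, h)`, `(p + h, 0)`, extended by `0`. -/
noncomputable def tentAt (p h s : ℝ) : ℝ := max 0 (min (h / p * s) (p + h - s))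

section Tent

variable {p h : ℝ}

theorem tentAt_of_le (hp : 0 < p) (hh : 0 ≤ h) {s : ℝ} (hs : 0 ≤ s) (hsp : s ≤ p) :
    tentAt p h s = h / p * s := by
  have : h / p * s ≤ h := by
    calc h / p * s ≤ h / p * p := mul_le_mul_of_nonneg_left hsp (by positivity)
      _ = h := div_mul_cancel₀ h hp.ne'
  rw [tentAt, min_eq_left (by linarith), max_eq_right (by positivity)]

theorem tentAt_of_ge (hp : 0 < p) (hh : 0 ≤ h) {s : ℝ} (hps : p ≤ s) :
    tentAt p h s = max 0 (p + h - s) := by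
  have : h ≤ h / p * s := by
    calc h = h / p * p := (div_mul_cancel₀ h hp.ne').symm
      _ ≤ h / p * s := mul_le_mul_of_nonneg_left hps (by positivity)
  rw [tentAt, min_eq_right (by linarith)]

theorem memF_tentAt (hp : 0 < p) (hh : 0 ≤ h) (hph : p + h ≤ 1) : MemF (tentAt p h) := by
  refine ⟨fun s hs => ⟨le_max_left _ _, max_le zero_le_one ?_⟩, ?_, ?_, ?_, ?_⟩
  · linarith [min_le_right (h / p * s) (p + h - s), hs.1]
  · rw [tentAt, mul_zero, sub_zero, min_eq_left (by linarith), max_self]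
  · exact max_eq_left ((min_le_right _ _).trans (by linarith))
  · intro a _ b _ hab
    simp only [tentAt, ← max_add_add_right, ← min_add_add_right, zero_add, sub_add_cancel]
    exact max_le_max hab (min_le_min (by nlinarith [div_nonneg hh hp.le]) le_rfl)
  · intro a ha b hb hab
    have hslope (s : ℝ) (hs : 0 < s) :
        tentAt p h s / s = max 0 (min (h / p) ((p + h) / s - 1)) := by
      rw [tentAt, ← max_div_div_right hs.le, ← min_div_div_right hs.le, zero_div,
        mul_div_cancel_right₀ _ hs.ne', sub_div, div_self hs.ne']
    simp only [hslope a ha.1, hslope b hb.1]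
    exact max_le_max le_rfl (min_le_min le_rfl
      (sub_le_sub_right (div_le_div_of_nonneg_left (by linarith) ha.1 hab) 1))

end Tent

theorem memF_zero : MemF (fun _ => 0) :=
  ⟨fun _ _ => ⟨le_rfl, zero_le_one⟩, rfl, rfl, fun _ _ _ _ hab => by simpa using hab,
    fun _ _ _ _ _ => by simp⟩

theorem isRMMCopula_mul : IsRMMCopula (fun u v => u * v) :=
  ⟨fun _ => 0, fun _ => 0, memF_zero, memF_zero, fun x hx y hy => by
    simp [mul_nonneg hx.1 hy.1]⟩

theorem exists_isRMMCopula_sub_eq {x y h : ℝ} (hx : 0 < x) (hxy : x < y) (hy : y < 1)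
    (hh : 0 ≤ h) (hxh : x + h ≤ 1) :
    ∃ C, IsRMMCopula C ∧ C x y - C y x =
      max 0 (x * y - (1 - y) / y * x * max 0 (x + h - y)) - max 0 (x * y - (1 - y) * h) := by
  have hy0 : 0 < y := hx.trans hxy
  refine ⟨fun u v => max 0 (u * v - tentAt y (1 - y) u * tentAt x h v),
    ⟨_, _, memF_tentAt hy0 (by linarith) (by linarith), memF_tentAt hx hh hxh,
      fun _ _ _ _ => rfl⟩, ?_⟩
  dsimp only
  rw [tentAt_of_le hy0 (by linarith) hx.le hxy.le, tentAt_of_ge hx hh hxy.le,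
    tentAt_of_ge hy0 (by linarith) le_rfl, tentAt_of_ge hx hh le_rfl, add_sub_cancel_left,
    add_sub_cancel_left, max_eq_right hh, max_eq_right (sub_nonneg.2 hy.le), mul_comm y x]

theorem dstarRMM_eq_zero {x y : ℝ} (hx : 0 ≤ x) (hxy : x ≤ y) (hy : y ≤ 1)
    (h : x = 0 ∨ x = y ∨ y = 1) : dstarRMM x y = 0 := by
  unfold dstarRMM
  rcases h with rfl | rfl | rfl <;> split_ifs with hR1 hR2
  · simp
  · simp [show y = 1 by linarith]
  · simp
  · simp
  · simp
  · exact absurd ⟨by nlinarith, le_min le_rfl (by linarith)⟩ hR1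
  · simp [show x = 0 by linarith [hR1.2.trans (min_le_right _ _)]]
  · simp
  · exact absurd (by linarith) hR2

theorem exists_isRMMCopula_sub_eq_of_le_one_sub {x y : ℝ} (hx : 0 < x) (hxy : x < y)
    (hy : y < 1) (hx1 : x ≤ 1 - y) :
    ∃ C, IsRMMCopula C ∧ C x y - C y x = max 0 (x * y - x / y * max 0 (x - y * (1 - y))) := by
  have hy0 : 0 < y := hx.trans hxy
  have h1y : 0 < 1 - y := sub_pos.2 hy
  have hxh : x + x * y / (1 - y) ≤ 1 := by
    rw [← le_sub_iff_add_le', div_le_iff₀ h1y]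
    nlinarith
  obtain ⟨C, hC, hCxy⟩ := exists_isRMMCopula_sub_eq hx hxy hy (by positivity) hxh
  have hsum : x + x * y / (1 - y) - y = (x - y * (1 - y)) / (1 - y) := by field_simp; ring
  have hfxgy : (1 - y) / y * x * (max 0 (x - y * (1 - y)) / (1 - y)) =
      x / y * max 0 (x - y * (1 - y)) := by
    field_simp
  refine ⟨C, hC, ?_⟩
  rw [hCxy, hsum, ← zero_div (1 - y), max_div_div_right h1y.le, zero_div, hfxgy,
    mul_div_cancel₀ _ h1y.ne', sub_self, max_self, sub_zero]

theorem exists_isRMMCopula_abs_sub_eq_dstarRMM {x y : ℝ} (hx : 0 ≤ x) (hxy : x ≤ y)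
    (hy : y ≤ 1) : ∃ C, IsRMMCopula C ∧ |C x y - C y x| = dstarRMM x y := by
  by_cases hdeg : x = 0 ∨ x = y ∨ y = 1
  · exact ⟨_, isRMMCopula_mul, by
      rw [mul_comm, sub_self, abs_zero, dstarRMM_eq_zero hx hxy hy hdeg]⟩
  push Not at hdeg
  replace hx := hx.lt_of_ne' hdeg.1
  replace hxy := hxy.lt_of_ne hdeg.2.1
  replace hy := hy.lt_of_ne hdeg.2.2
  have hy0 : 0 < y := hx.trans hxy
  unfold dstarRMM
  split_ifs with hR1 hR2
  · obtain ⟨C, hC, hCxy⟩ := exists_isRMMCopula_sub_eq_of_le_one_sub hx hxy hy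
      (hR1.2.trans (min_le_right _ _))
    have hval : x * y - x / y * (x - y * (1 - y)) = x / y * (y - x) := by
      field_simp
      ring
    have hd : 0 ≤ x / y * (y - x) := mul_nonneg (by positivity) (sub_nonneg.2 hxy.le)
    refine ⟨C, hC, ?_⟩
    rw [hCxy, max_eq_right (sub_nonneg.2 hR1.1), hval, max_eq_right hd, abs_of_nonneg hd]
  · obtain ⟨C, hC, hCxy⟩ := exists_isRMMCopula_sub_eq hx hxy hy (sub_nonneg.2 (hxy.trans hy).le)
      (by linarith)
    have hfxgy : (1 - y) / y * x * (1 - y) ≤ x * y := by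
      rw [div_mul_eq_mul_div, div_mul_eq_mul_div, div_le_iff₀ hy0]
      nlinarith
    have hfygx : (1 - y) * (1 - x) ≤ x * y := by nlinarith
    have hval : x * y - (1 - y) / y * x * (1 - y) - (x * y - (1 - y) * (1 - x)) =
        (1 - y) / y * (y - x) := by
      field_simp
      ring
    refine ⟨C, hC, ?_⟩
    rw [hCxy, add_sub_cancel, max_eq_right (sub_nonneg.2 hy.le), max_eq_right (sub_nonneg.2 hfxgy),
      max_eq_right (sub_nonneg.2 hfygx), hval,
      abs_of_nonneg (mul_nonneg (div_nonneg (sub_nonneg.2 hy.le) hy0.le) (sub_nonneg.2 hxy.le))]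
  · push Not at hR2
    have hxy1 : x < y * (1 - y) := by
      by_contra! h
      exact hR1 ⟨h, le_min hxy.le hR2.le⟩
    obtain ⟨C, hC, hCxy⟩ := exists_isRMMCopula_sub_eq_of_le_one_sub hx hxy hy hR2.le
    refine ⟨C, hC, ?_⟩
    rw [hCxy, max_eq_left (sub_nonpos.2 hxy1.le), mul_zero, sub_zero, max_eq_right (by positivity),
      abs_of_nonneg (by positivity)]

theorem mul_dstarRMM_le {x y : ℝ} (hx : 0 ≤ x) (hxy : x ≤ y) (hy : y ≤ 1) :
    y * dstarRMM x y ≤ min x (1 - y) * (y - x) := by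
  rcases (hx.trans hxy).eq_or_lt with rfl | hy0
  · simp [le_antisymm hxy hx]
  unfold dstarRMM
  split_ifs with hR1 hR2
  · rw [min_eq_left (hR1.2.trans (min_le_right _ _)), ← mul_assoc, mul_div_cancel₀ _ hy0.ne']
  · rw [min_eq_right hR2, ← mul_assoc, mul_div_cancel₀ _ hy0.ne']
  · push Not at hR2
    rw [min_eq_left hR2.le]
    have : x < y * (1 - y) := by
      by_contra! h
      exact hR1 ⟨h, le_min hxy hR2.le⟩
    nlinarith

theorem mul_sub_le_three_sub_two_sqrt_two_mul {m y : ℝ} (hm : 0 ≤ m) (hy : 0 ≤ y)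
    (hmy : m + y ≤ 1) : m * (y - m) ≤ (3 - 2 * √2) * y := by
  have hs : √2 ^ 2 = 2 := Real.sq_sqrt zero_le_two
  rcases le_total m (3 - 2 * √2) with hmc | hmc
  · nlinarith [mul_le_mul_of_nonneg_right hmc hy]
  · -- `c = 3 - 2√2` solves `c² - 6c + 1 = 0`, so `-2m² + (1 + c)m - c = -2 (m - (1 + c) / 4)²`
    nlinarith [sq_nonneg (m - (4 - 2 * √2) / 4), mul_nonneg (sub_nonneg.2 hmy) (sub_nonneg.2 hmc)]

theorem dstarRMM_le_three_sub_two_sqrt_two {x y : ℝ} (hx : 0 ≤ x) (hxy : x ≤ y) (hy : y ≤ 1) :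
    dstarRMM x y ≤ 3 - 2 * √2 := by
  rcases (hx.trans hxy).eq_or_lt with rfl | hy0
  · rw [dstarRMM_eq_zero hx hxy hy (Or.inl (le_antisymm hxy hx))]
    nlinarith [Real.sq_sqrt zero_le_two, Real.sqrt_nonneg 2]
  have hm0 : 0 ≤ min x (1 - y) := le_min hx (sub_nonneg.2 hy)
  have key := mul_sub_le_three_sub_two_sqrt_two_mul hm0 hy0.le
    (by linarith [min_le_right x (1 - y)] : min x (1 - y) + y ≤ 1)
  refine le_of_mul_le_mul_left ?_ hy0
  nlinarith [mul_dstarRMM_le hx hxy hy, mul_le_mul_of_nonneg_left (min_le_left x (1 - y)) hm0]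

theorem IsRMMCopula.abs_sub_le_three_sub_two_sqrt_two {C : ℝ → ℝ → ℝ} (hC : IsRMMCopula C)
    {x y : ℝ} (hx : x ∈ Icc (0 : ℝ) 1) (hy : y ∈ Icc (0 : ℝ) 1) :
    |C x y - C y x| ≤ 3 - 2 * √2 := by
  wlog hxy : x ≤ y generalizing x y
  · rw [abs_sub_comm]
    exact this hy hx (le_of_not_ge hxy)
  exact (hC.abs_sub_le_dstarRMM hx.1 hxy hy.2).trans
    (dstarRMM_le_three_sub_two_sqrt_two hx.1 hxy hy.2)

theorem exists_isRMMCopula_abs_sub_eq_three_sub_two_sqrt_two :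
    ∃ C, IsRMMCopula C ∧ ∃ x ∈ Icc (0 : ℝ) 1, ∃ y ∈ Icc (0 : ℝ) 1,
      |C x y - C y x| = 3 - 2 * √2 := by
  have hs : √2 ^ 2 = 2 := Real.sq_sqrt zero_le_two
  have hs1 : 1 ≤ √2 := Real.one_lt_sqrt_two.le
  have hs2 : √2 ≤ 2 := by nlinarith [Real.sqrt_nonneg 2]
  have hd : dstarRMM (1 - √2 / 2) (√2 / 2) = 3 - 2 * √2 := by
    rw [dstarRMM, if_pos ⟨by nlinarith, le_min (by linarith) le_rfl⟩]
    field_simp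
    linear_combination 2 * hs
  obtain ⟨C, hC, hCd⟩ := exists_isRMMCopula_abs_sub_eq_dstarRMM (x := 1 - √2 / 2) (y := √2 / 2)
    (by linarith) (by linarith) (by linarith)
  exact ⟨C, hC, _, ⟨by linarith, by linarith⟩, _, ⟨by linarith, by linarith⟩, hCd.trans hd⟩

theorem isGreatest_rmm_asymmetry {x y : ℝ} (hx : 0 ≤ x) (hxy : x ≤ y) (hy : y ≤ 1) :
    IsGreatest {d | ∃ C, IsRMMCopula C ∧ d = |C x y - C y x|} (dstarRMM x y) := by
  obtain ⟨C, hC, hCd⟩ := exists_isRMMCopula_abs_sub_eq_dstarRMM hx hxy hy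
  exact ⟨⟨C, hC, hCd.symm⟩, by rintro _ ⟨C, hC, rfl⟩; exact hC.abs_sub_le_dstarRMM hx hxy hy⟩

/-- Theorem 6.3: every RMM copula satisfies
`|C(x,y) − C(y,x)| ≤ 3 − 2√2`, the bound is sharp, and for `x ≤ y` in `[0,1]` the
maximal asymmetry function of the family of RMM copulas is given by `dstarRMM`;
for `x ≥ y` the supremum equals the value at `(y,x)`. -/
theorem rmm_maximal_asymmetry :
    (∀ C : ℝ → ℝ → ℝ, IsRMMCopula C →
      ∀ x ∈ Set.Icc (0:ℝ) 1, ∀ y ∈ Set.Icc (0:ℝ) 1,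
        |C x y - C y x| ≤ 3 - 2 * Real.sqrt 2) ∧
    (∃ C : ℝ → ℝ → ℝ, IsRMMCopula C ∧
      ∃ x ∈ Set.Icc (0:ℝ) 1, ∃ y ∈ Set.Icc (0:ℝ) 1,
        |C x y - C y x| = 3 - 2 * Real.sqrt 2) ∧
    (∀ x ∈ Set.Icc (0:ℝ) 1, ∀ y ∈ Set.Icc (0:ℝ) 1, x ≤ y →
      IsLUB {d : ℝ | ∃ C : ℝ → ℝ → ℝ, IsRMMCopula C ∧ d = |C x y - C y x|}
        (dstarRMM x y)) ∧
    (∀ x ∈ Set.Icc (0:ℝ) 1, ∀ y ∈ Set.Icc (0:ℝ) 1, y ≤ x →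
      IsLUB {d : ℝ | ∃ C : ℝ → ℝ → ℝ, IsRMMCopula C ∧ d = |C x y - C y x|}
        (dstarRMM y x)) := by
  have hsup (x : ℝ) (hx : x ∈ Icc (0 : ℝ) 1) (y : ℝ) (hy : y ∈ Icc (0 : ℝ) 1) (hxy : x ≤ y) :=
    (isGreatest_rmm_asymmetry hx.1 hxy hy.2).isLUB
  refine ⟨fun C hC x hx y hy => hC.abs_sub_le_three_sub_two_sqrt_two hx hy,
    exists_isRMMCopula_abs_sub_eq_three_sub_two_sqrt_two, hsup, fun x hx y hy hyx => ?_⟩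
  simpa only [abs_sub_comm] using hsup y hy x hx hyx
end
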